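/- arXiv:1509.02204 — 6 statements merged into one kernel-verified Lean document; each statement's English description precedes it below -/
import Mathlib

section
/- Let A be a compact, symmetric, positive bounded operator on ℓ²(ℕ₀) with spectral decomposition A = ∑_k λ_k ⟨ν_k, ·⟩ ν_k, where λ₀ is the (simple) largest eigenvalue, |λ_k| ≤ |λ₁| < λ₀ for k ≥ 1, the ν_k are orthonormal, and ν₀(0) > 0. Then the restricted operator norm ‖A‖_{op,*} := sup{‖Au‖₂ : ‖u‖₂ = 1, u(0) = 0} satisfies ‖A‖_{op,*} ≤ √(λ₀²(1 − ν₀(0)²) + λ₁² ν₀(0)²) < λ₀ = ‖A‖_op. -/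
open scoped RealInnerProductSpace


section helpers
variable {E : Type*} [NormedAddCommGroup E] [InnerProductSpace ℝ E] [CompleteSpace E]

lemma aux_summable {ν : ℕ → E} (hON : Orthonormal ℝ ν) {c : ℕ → ℝ}
    (hc : Summable fun k => (c k) ^ 2) : Summable fun k => c k • ν k := by
  have h := (hON.orthogonalFamily.summable_iff_norm_sq_summable c).2
    (by simpa [Real.norm_eq_abs, sq_abs] using hc)
  simpa [LinearIsometry.toSpanSingleton_apply] using h

lemma aux_inner {ν : ℕ → E} (hON : Orthonormal ℝ ν) {c : ℕ → ℝ}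
    (hc : Summable fun k => (c k) ^ 2) (j : ℕ) :
    ⟪ν j, ∑' k, c k • ν k⟫ = c j := by
  have hs := (aux_summable hON hc).hasSum
  have h2 := hs.mapL (innerSL ℝ (ν j))
  have h3 : HasSum (fun k => (innerSL ℝ (ν j)) (c k • ν k)) (c j) := by
    have : (fun k => (innerSL ℝ (ν j)) (c k • ν k)) = fun k => if k = j then c j else 0 := by
      funext k
      simp only [innerSL_apply_apply, real_inner_smul_right, orthonormal_iff_ite.mp hON j k]
      by_cases h : k = j <;> simp [h, eq_comm, Ne.symm]
    rw [this]
    exact hasSum_ite_eq j (c j)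
  exact h2.unique h3

lemma aux_norm_sq {ν : ℕ → E} (hON : Orthonormal ℝ ν) {c : ℕ → ℝ}
    (hc : Summable fun k => (c k) ^ 2) :
    ‖∑' k, c k • ν k‖ ^ 2 = ∑' k, (c k) ^ 2 := by
  set S := ∑' k, c k • ν k with hS
  have hs := (aux_summable hON hc).hasSum
  have h2 := hs.mapL (innerSL ℝ S)
  have h3 : (fun k => (innerSL ℝ S) (c k • ν k)) = fun k => (c k) ^ 2 := by
    funext k
    simp only [innerSL_apply_apply, real_inner_smul_right]
    rw [real_inner_comm, aux_inner hON hc k]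
    ring
  rw [h3] at h2
  rw [← real_inner_self_eq_norm_sq]
  exact h2.tsum_eq.symm

end helpers


set_option maxHeartbeats 2000000 in
set_option synthInstance.maxHeartbeats 400000 in
/-- Restricted operator norm bound for a compact symmetric positive operator on
`ℓ²(ℕ)` with spectral decomposition `A = ∑ λ_k ⟨ν_k, ·⟩ ν_k`, simple top eigenvalue
`λ₀` with spectral gap `|λ₁| < λ₀`, and `ν₀(0) > 0`: for unit vectors `u` with
`u(0) = 0`, `‖Au‖ ≤ √(λ₀²(1 − ν₀(0)²) + λ₁² ν₀(0)²) < λ₀ = ‖A‖`. -/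
theorem stmt7 (A : lp (fun _ : ℕ => ℝ) 2 →L[ℝ] lp (fun _ : ℕ => ℝ) 2)
    (lam : ℕ → ℝ) (ν : ℕ → lp (fun _ : ℕ => ℝ) 2)
    (hON : Orthonormal ℝ ν)
    (hA : ∀ u, A u = ∑' k, (lam k * ⟪ν k, u⟫) • ν k)
    (hlam0 : 0 < lam 0)
    (hgap : |lam 1| < lam 0)
    (hbound : ∀ k, 1 ≤ k → |lam k| ≤ |lam 1|)
    (hν0 : 0 < ν 0 0) :
    (∀ u, ‖u‖ = 1 → u 0 = 0 →
      ‖A u‖ ≤ Real.sqrt ((lam 0) ^ 2 * (1 - (ν 0 0) ^ 2) + (lam 1) ^ 2 * (ν 0 0) ^ 2)) ∧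
    Real.sqrt ((lam 0) ^ 2 * (1 - (ν 0 0) ^ 2) + (lam 1) ^ 2 * (ν 0 0) ^ 2) < lam 0 ∧
    ‖A‖ = lam 0 := by
  have hsq1 : (lam 1) ^ 2 < (lam 0) ^ 2 := by
    nlinarith [sq_abs (lam 1), abs_nonneg (lam 1)]
  have habsle : ∀ k, |lam k| ≤ lam 0 := by
    intro k
    rcases Nat.eq_zero_or_pos k with hk | hk
    · subst hk; rw [abs_of_pos hlam0]
    · exact le_trans (hbound k hk) hgap.le
  -- summability facts
  have hbes : ∀ u : lp (fun _ : ℕ => ℝ) 2, Summable fun k => (⟪ν k, u⟫ : ℝ) ^ 2 := by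
    intro u
    simpa [Real.norm_eq_abs, sq_abs] using hON.inner_products_summable u
  have hbesle : ∀ u : lp (fun _ : ℕ => ℝ) 2, (∑' k, (⟪ν k, u⟫ : ℝ) ^ 2) ≤ ‖u‖ ^ 2 := by
    intro u
    simpa [Real.norm_eq_abs, sq_abs] using hON.tsum_inner_products_le u
  have hcsum : ∀ u : lp (fun _ : ℕ => ℝ) 2,
      Summable fun k => (lam k * ⟪ν k, u⟫) ^ 2 := by
    intro u
    refine Summable.of_nonneg_of_le (fun k => sq_nonneg _) (fun k => ?_)
      (((hbes u).mul_left ((lam 0) ^ 2)))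
    have h1 : (lam k) ^ 2 ≤ (lam 0) ^ 2 := by
      nlinarith [habsle k, sq_abs (lam k), abs_nonneg (lam k)]
    rw [mul_pow]
    exact mul_le_mul_of_nonneg_right h1 (sq_nonneg _)
  have hAnormsq : ∀ u : lp (fun _ : ℕ => ℝ) 2,
      ‖A u‖ ^ 2 = ∑' k, (lam k * ⟪ν k, u⟫) ^ 2 := by
    intro u
    rw [hA u]
    exact aux_norm_sq hON (hcsum u)
  -- operator norm equals lam 0
  have hAup : ‖A‖ ≤ lam 0 := by
    refine A.opNorm_le_bound hlam0.le fun u => ?_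
    have h1 : ‖A u‖ ^ 2 ≤ (lam 0) ^ 2 * ‖u‖ ^ 2 := by
      rw [hAnormsq u]
      calc (∑' k, (lam k * ⟪ν k, u⟫) ^ 2)
          ≤ ∑' k, (lam 0) ^ 2 * (⟪ν k, u⟫ : ℝ) ^ 2 := by
            refine Summable.tsum_le_tsum (fun k => ?_) (hcsum u) ((hbes u).mul_left _)
            rw [mul_pow]
            refine mul_le_mul_of_nonneg_right ?_ (sq_nonneg _)
            nlinarith [habsle k, sq_abs (lam k), abs_nonneg (lam k)]
        _ = (lam 0) ^ 2 * ∑' k, (⟪ν k, u⟫ : ℝ) ^ 2 := tsum_mul_left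
        _ ≤ (lam 0) ^ 2 * ‖u‖ ^ 2 := by
            exact mul_le_mul_of_nonneg_left (hbesle u) (sq_nonneg _)
    have h2 : (0:ℝ) ≤ lam 0 * ‖u‖ := mul_nonneg hlam0.le (norm_nonneg _)
    nlinarith [norm_nonneg (A u), h1]
  have hAν0 : A (ν 0) = lam 0 • ν 0 := by
    rw [hA (ν 0)]
    have : (fun k => (lam k * ⟪ν k, ν 0⟫) • ν k)
        = fun k => if k = 0 then lam 0 • ν 0 else 0 := by
      funext k
      rw [orthonormal_iff_ite.mp hON k 0]
      by_cases h : k = 0 <;> simp [h]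
    rw [this]; exact tsum_ite_eq 0 (fun _ => lam 0 • ν 0)
  have hν0norm : ‖ν 0‖ = 1 := hON.1 0
  have hAlow : lam 0 ≤ ‖A‖ := by
    have h := A.le_opNorm (ν 0)
    rw [hAν0, norm_smul, hν0norm, Real.norm_eq_abs, abs_of_pos hlam0] at h
    simp only [mul_one] at h
    exact h
  refine ⟨?_, ?_, le_antisymm hAup hAlow⟩
  · -- main bound for u with u 0 = 0
    intro u hu1 hu0
    set t := ν 0 0 with ht
    set c : ℕ → ℝ := fun k => ⟪ν k, u⟫ with hcdef
    have hc0 : (c 0) ^ 2 ≤ 1 - t ^ 2 := by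
      set e₀ : lp (fun _ : ℕ => ℝ) 2 := lp.single 2 0 (1:ℝ) with he
      have he0norm : ‖e₀‖ = 1 := by
        have := lp.norm_single (E := fun _ : ℕ => ℝ) (p := 2) (by norm_num) 0 (1:ℝ)
        simpa [he] using this
      have hinner_e0_u : (⟪e₀, u⟫ : ℝ) = u 0 := by
        have := lp.inner_single_left (𝕜 := ℝ) 0 (1:ℝ) u
        simpa using this
      have hinner_ν0_e0 : (⟪ν 0, e₀⟫ : ℝ) = t := by
        have := lp.inner_single_right (𝕜 := ℝ) 0 (1:ℝ) (ν 0)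
        simpa using this
      have hw : (⟪ν 0 - t • e₀, u⟫ : ℝ) = c 0 := by
        rw [inner_sub_left, real_inner_smul_left, hinner_e0_u, hu0]
        simp [hcdef]
      have hwnorm : ‖ν 0 - t • e₀‖ ^ 2 = 1 - t ^ 2 := by
        rw [norm_sub_sq_real, real_inner_smul_right, hinner_ν0_e0, norm_smul, hν0norm,
          he0norm, Real.norm_eq_abs]
        rw [mul_pow, sq_abs]
        ring
      have hcs : |c 0| ≤ ‖ν 0 - t • e₀‖ * ‖u‖ := by
        rw [← hw]
        exact abs_real_inner_le_norm _ _
      rw [hu1, mul_one] at hcs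
      calc (c 0) ^ 2 = |c 0| ^ 2 := (sq_abs _).symm
        _ ≤ ‖ν 0 - t • e₀‖ ^ 2 := by
            exact pow_le_pow_left₀ (abs_nonneg _) hcs 2
        _ = 1 - t ^ 2 := hwnorm
    -- split the sums
    have hf : Summable fun k => (lam k * c k) ^ 2 := hcsum u
    have hcsq : Summable fun k => (c k) ^ 2 := hbes u
    have hfsplit : (∑' k, (lam k * c k) ^ 2)
        = (lam 0 * c 0) ^ 2 + ∑' k, (lam (k + 1) * c (k + 1)) ^ 2 :=
      Summable.tsum_eq_zero_add hf
    have hcsplit : (∑' k, (c k) ^ 2) = (c 0) ^ 2 + ∑' k, (c (k + 1)) ^ 2 :=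
      Summable.tsum_eq_zero_add hcsq
    have htail : (∑' k, (lam (k + 1) * c (k + 1)) ^ 2)
        ≤ (lam 1) ^ 2 * ∑' k, (c (k + 1)) ^ 2 := by
      rw [← tsum_mul_left]
      refine Summable.tsum_le_tsum (fun k => ?_) ((summable_nat_add_iff 1).mpr hf)
        (((summable_nat_add_iff 1).mpr hcsq).mul_left _)
      have h1 : (lam (k + 1)) ^ 2 ≤ (lam 1) ^ 2 := by
        have := hbound (k + 1) (Nat.succ_le_succ (Nat.zero_le k))
        nlinarith [sq_abs (lam (k + 1)), sq_abs (lam 1), abs_nonneg (lam (k + 1)),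
          abs_nonneg (lam 1)]
      rw [mul_pow]
      exact mul_le_mul_of_nonneg_right h1 (sq_nonneg _)
    have hS1 : (∑' k, (c k) ^ 2) ≤ 1 := by
      have := hbesle u
      rw [hu1] at this
      simpa using this
    have hkey : ‖A u‖ ^ 2 ≤ (lam 0) ^ 2 * (1 - t ^ 2) + (lam 1) ^ 2 * t ^ 2 := by
      rw [hAnormsq u, hfsplit]
      have htail0 : (0:ℝ) ≤ ∑' k, (c (k + 1)) ^ 2 :=
        tsum_nonneg fun k => sq_nonneg _
      nlinarith [htail, hc0, hS1, hcsplit, hsq1, sq_nonneg (lam 1), sq_nonneg (c 0),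
        sq_nonneg t, mul_pow (lam 0) (c 0) 2]
    have := Real.sqrt_le_sqrt hkey
    rwa [Real.sqrt_sq (norm_nonneg _)] at this
  · rw [Real.sqrt_lt' hlam0]
    nlinarith [hsq1, sq_nonneg (ν 0 0), mul_pos (mul_pos hν0 hν0) (sub_pos.mpr hsq1)]
end

section
/- Let B be a bounded linear operator on a Hilbert space, and let B̃ be defined from a bounded operator A by (B̃u)(0) = 0 and (B̃u)(i) = ∑_j A(i−1, j) u(j) for i ≥ 1, where A is compact symmetric with simple top eigenvalue whose eigenvector has strictly positive 0-th coordinate. Then the spectral radius of B̃ is strictly smaller than the spectral radius (= operator norm) of A. -/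
set_option maxHeartbeats 1000000

open scoped RealInnerProductSpace

noncomputable abbrev EE := lp (fun _ : ℕ => ℝ) 2

-- coordinate formula
lemma coordHasSum (T : EE →L[ℝ] EE) (hTsym : ∀ u v : EE, ⟪T u, v⟫ = ⟪u, T v⟫)
    (u : EE) (i : ℕ) :
    HasSum (fun j => u j * (T (lp.single 2 i 1)) j) (T u i) := by
  have h1 : (T u) i = ⟪u, T (lp.single 2 i 1)⟫ := by
    rw [← hTsym, lp.inner_single_right]
    simp [RCLike.inner_apply]
  have h2 := lp.hasSum_inner (𝕜 := ℝ) u (T (lp.single 2 i 1))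
  simp only [RCLike.inner_apply, conj_trivial] at h2
  rw [h1]; convert h2 using 2 with j
  · rfl
  · exact mul_comm (G := ℝ) _ _

-- abs element
noncomputable def absE (b : EE) : EE :=
  ⟨fun i => |b i|, by
    apply memℓp_gen
    have := (lp.memℓp b)
    rw [memℓp_gen_iff (by norm_num)] at this
    simpa using this⟩

lemma absE_apply (b : EE) (i : ℕ) : absE b i = |b i| := rfl

lemma absE_norm (b : EE) : ‖absE b‖ = ‖b‖ := by
  rw [lp.norm_eq_tsum_rpow (by norm_num) (absE b), lp.norm_eq_tsum_rpow (by norm_num) b]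
  congr 1
  apply tsum_congr
  intro i
  simp [absE_apply, Real.norm_eq_abs, abs_abs]

lemma perron (T : EE →L[ℝ] EE) (hTsym : ∀ u v : EE, ⟪T u, v⟫ = ⟪u, T v⟫)
    (ht : ∀ i j : ℕ, 0 < (T (lp.single 2 i (1:ℝ))) j)
    (mu : ℝ) (hmu : ‖T‖ = mu) (hmupos : 0 < mu)
    (b : EE) (hb : T b = -(mu • b)) : b = 0 := by
  set p := absE b with hp
  -- pointwise |T b i| ≤ T p i
  have habs : ∀ i, |T b i| ≤ T p i := by
    intro i
    have hbsum := coordHasSum T hTsym b i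
    have hpsum := coordHasSum T hTsym p i
    have hkey : ∀ j, |b j * T (lp.single 2 i 1) j| = p j * T (lp.single 2 i 1) j := by
      intro j
      rw [abs_mul, abs_of_pos (ht i j)]
      rfl
    have hs2 : Summable fun j => |b j * T (lp.single 2 i 1) j| := by
      apply Summable.congr hpsum.summable
      intro j; rw [hkey j]
    calc |T b i| = |∑' j, b j * T (lp.single 2 i 1) j| := by rw [hbsum.tsum_eq]
      _ ≤ ∑' j, |b j * T (lp.single 2 i 1) j| := by
          have hs3 : Summable fun j => ‖b j * T (lp.single 2 i 1) j‖ := by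
            simpa only [Real.norm_eq_abs] using hs2
          have := norm_tsum_le_tsum_norm hs3
          simpa only [Real.norm_eq_abs] using this
      _ = ∑' j, p j * T (lp.single 2 i 1) j := tsum_congr hkey
      _ = T p i := hpsum.tsum_eq
  have hppos : ∀ i, 0 ≤ p i := fun i => abs_nonneg _
  have hTppos : ∀ i, 0 ≤ T p i := fun i => le_trans (abs_nonneg _) (habs i)
  -- inner products
  have hinb := lp.hasSum_inner (𝕜 := ℝ) (T b) b
  simp only [RCLike.inner_apply, conj_trivial] at hinb
  have hinp := lp.hasSum_inner (𝕜 := ℝ) (T p) p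
  simp only [RCLike.inner_apply, conj_trivial] at hinp
  have hTbb : ⟪T b, b⟫ = -(mu * ‖b‖ ^ 2) := by
    rw [hb, inner_neg_left, real_inner_smul_left, real_inner_self_eq_norm_sq]
  have hsum_abs : Summable fun i => |T b i * b i| :=
    hinb.summable.abs.congr fun i => by rw [mul_comm]
  have hdom : ∀ i, |T b i * b i| ≤ T p i * p i := by
    intro i
    rw [abs_mul]
    exact mul_le_mul (habs i) (le_of_eq rfl) (abs_nonneg _) (hTppos i)
  have hchain : mu * ‖b‖ ^ 2 ≤ ⟪T p, p⟫ := by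
    have h1 : |⟪T b, b⟫| ≤ ∑' i, |T b i * b i| := by
      rw [← hinb.tsum_eq]
      have hs3 : Summable fun i => ‖T b i * b i‖ := by
        simpa only [Real.norm_eq_abs] using hsum_abs
      have := norm_tsum_le_tsum_norm hs3
      simpa only [Real.norm_eq_abs, mul_comm] using this
    have h2 : (∑' i, |T b i * b i|) ≤ ∑' i, T p i * p i :=
      Summable.tsum_le_tsum hdom hsum_abs (hinp.summable.congr fun i => mul_comm _ _)
    have h3 : |⟪T b, b⟫| = mu * ‖b‖ ^ 2 := by
      rw [hTbb, abs_neg, abs_of_nonneg (by positivity)]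
    rw [← h3, ← hinp.tsum_eq]
    exact h1.trans (h2.trans_eq (tsum_congr fun i => mul_comm _ _))
  -- T p = mu • p
  have hTple : ‖T p‖ ≤ mu * ‖p‖ := by
    rw [← hmu]; exact T.le_opNorm p
  have hnp : ‖p‖ = ‖b‖ := absE_norm b
  have hTpp_le : ⟪T p, p⟫ ≤ mu * ‖p‖ ^ 2 := by
    calc ⟪T p, p⟫ ≤ ‖T p‖ * ‖p‖ := real_inner_le_norm _ _
      _ ≤ (mu * ‖p‖) * ‖p‖ := by
          apply mul_le_mul_of_nonneg_right hTple (norm_nonneg _)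
      _ = mu * ‖p‖ ^ 2 := by ring
  have hTpp : ⟪T p, p⟫ = mu * ‖p‖ ^ 2 := by
    refine le_antisymm hTpp_le ?_
    rw [hnp]; exact hchain
  have hTp : T p = mu • p := by
    have hexp : ‖T p - mu • p‖ ^ 2 = ‖T p‖ ^ 2 - 2 * (mu * ⟪T p, p⟫) + mu ^ 2 * ‖p‖ ^ 2 := by
      rw [norm_sub_sq_real, real_inner_smul_right, norm_smul]
      simp [mul_pow, Real.norm_eq_abs, sq_abs]
    have h2 : ‖T p - mu • p‖ ^ 2 ≤ 0 := by
      rw [hexp, hTpp]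
      nlinarith [hTple, norm_nonneg p, norm_nonneg (T p), hmupos]
    have h3 : ‖T p - mu • p‖ = 0 := by
      have := norm_nonneg (T p - mu • p)
      nlinarith
    rw [← sub_eq_zero]
    exact norm_eq_zero.mp h3
  -- equality of abs at coordinate 0 forces constant sign
  have hb0 : T b 0 = -(mu * b 0) := by
    rw [hb]; simp [lp.coeFn_neg, lp.coeFn_smul]; rfl
  have hp0 : T p 0 = mu * p 0 := by
    rw [hTp]; simp [lp.coeFn_smul]
  have habs0 : |T b 0| = T p 0 := by
    rw [hb0, hp0, abs_neg, abs_mul, abs_of_pos hmupos]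
    congr 1
  -- sign dichotomy
  have hple : ∀ k, b k ≤ p k := fun k => le_abs_self _
  have hnegle : ∀ k, -(p k) ≤ b k := fun k => neg_abs_le _
  have hbsum := coordHasSum T hTsym b 0
  have hpsum := coordHasSum T hTsym p 0
  have hbconst : (∀ j, b j = p j) ∨ (∀ j, b j = -(p j)) := by
    rcases le_or_gt 0 (T b 0) with hs | hs
    · left
      have hzero : HasSum (fun j => (p j - b j) * T (lp.single 2 0 1) j) 0 := by
        have h := hpsum.sub hbsum
        have : T p 0 - T b 0 = 0 := by
          rw [← habs0, abs_of_nonneg hs]; ring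
        rw [this] at h
        convert h using 2 with j
        · rfl
        · exact sub_mul (α := ℝ) _ _ _
      intro j
      have hterm : (p j - b j) * T (lp.single 2 0 1) j ≤ 0 := by
        exact le_hasSum hzero j (fun k _ =>
          mul_nonneg (by linarith [hple k]) (ht 0 k).le)
      have hnn : 0 ≤ (p j - b j) * T (lp.single 2 0 1) j :=
        mul_nonneg (by linarith [hple j]) (ht 0 j).le
      have : (p j - b j) * T (lp.single 2 0 1) j = 0 := le_antisymm hterm hnn
      have := mul_eq_zero.mp this
      rcases this with h | h
      · linarith [sub_eq_zero.mp h]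
      · exact absurd h (ne_of_gt (ht 0 j))
    · right
      have hzero : HasSum (fun j => (p j + b j) * T (lp.single 2 0 1) j) 0 := by
        have h := hpsum.add hbsum
        have : T p 0 + T b 0 = 0 := by
          rw [← habs0, abs_of_neg hs]; ring
        rw [this] at h
        convert h using 2 with j
        ring
      intro j
      have hterm : (p j + b j) * T (lp.single 2 0 1) j ≤ 0 := by
        exact le_hasSum hzero j (fun k _ =>
          mul_nonneg (by linarith [hnegle k]) (ht 0 k).le)
      have hnn : 0 ≤ (p j + b j) * T (lp.single 2 0 1) j :=
        mul_nonneg (by linarith [hnegle j]) (ht 0 j).le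
      have : (p j + b j) * T (lp.single 2 0 1) j = 0 := le_antisymm hterm hnn
      rcases mul_eq_zero.mp this with h | h
      · linarith [h]
      · exact absurd h (ne_of_gt (ht 0 j))
  -- conclude
  have hbeig : T b = mu • b := by
    rcases hbconst with hc | hc
    · have : b = p := by
        apply lp.ext
        funext j
        exact hc j
      rw [this, hTp]
    · have : b = -p := by
        apply lp.ext
        funext j
        simpa using hc j
      rw [this]
      simp only [map_neg, hTp, smul_neg]
  have heq : mu • b = -(mu • b) := hbeig.symm.trans hb
  have hsum0 : mu • b + mu • b = 0 := add_eq_zero_iff_eq_neg.mpr heq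
  have h2 : (2 : ℝ) • (mu • b) = 0 := by
    rw [two_smul]; exact hsum0
  have := smul_eq_zero.mp h2
  rcases this with h | h
  · norm_num at h
  · rcases smul_eq_zero.mp h with h | h
    · exact absurd h (ne_of_gt hmupos)
    · exact h

lemma gap (T : EE →L[ℝ] EE) (hTsym : ∀ u v : EE, ⟪T u, v⟫ = ⟪u, T v⟫)
    (hTcomp : IsCompactOperator ⇑T)
    (ht : ∀ i j : ℕ, 0 < (T (lp.single 2 i (1:ℝ))) j)
    (mu : ℝ) (hmu : ‖T‖ = mu) (hmupos : 0 < mu)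
    (ν₀ : EE) (hsimple : ∀ v, T v = mu • v → ∃ c : ℝ, v = c • ν₀) (hν00 : 0 < ν₀ 0) :
    ∃ c : ℝ, 0 ≤ c ∧ c < mu ∧ ∀ v : EE, v 0 = 0 → ‖T v‖ ≤ c * ‖v‖ := by
  classical
  set Q : Set ℝ := {r | ∃ v : EE, ‖v‖ ≤ 1 ∧ v 0 = 0 ∧ r = ‖T v‖} with hQ
  have hQ0 : (0 : ℝ) ∈ Q := by
    refine ⟨0, by simp, by simp, by simp⟩
  have hQne : Q.Nonempty := ⟨0, hQ0⟩
  have hQbdd : ∀ r ∈ Q, r ≤ mu := by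
    rintro r ⟨v, hv1, hv0, rfl⟩
    calc ‖T v‖ ≤ ‖T‖ * ‖v‖ := T.le_opNorm v
      _ ≤ mu * 1 := by rw [hmu]; exact mul_le_mul_of_nonneg_left hv1 hmupos.le
      _ = mu := mul_one mu
  have hQbdd' : BddAbove Q := ⟨mu, fun r hr => hQbdd r hr⟩
  set c := sSup Q with hc
  have hc0 : 0 ≤ c := le_csSup hQbdd' hQ0
  have hcmu : c ≤ mu := csSup_le hQne hQbdd
  have hbound : ∀ v : EE, v 0 = 0 → ‖T v‖ ≤ c * ‖v‖ := by
    intro v hv0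
    rcases eq_or_ne v 0 with rfl | hvne
    · simp
    · have hvpos : 0 < ‖v‖ := norm_pos_iff.mpr hvne
      set w : EE := ‖v‖⁻¹ • v with hw
      have hw1 : ‖w‖ ≤ 1 := by
        rw [hw, norm_smul, norm_inv, norm_norm, inv_mul_cancel₀ hvpos.ne']
      have hw0 : w 0 = 0 := by
        rw [hw]
        simp only [lp.coeFn_smul, Pi.smul_apply, smul_eq_mul, hv0, mul_zero]
      have hmem : ‖T w‖ ∈ Q := ⟨w, hw1, hw0, rfl⟩
      have hle : ‖T w‖ ≤ c := le_csSup hQbdd' hmem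
      have : ‖T w‖ = ‖v‖⁻¹ * ‖T v‖ := by
        rw [hw, map_smul, norm_smul, norm_inv, norm_norm]
      rw [this] at hle
      calc ‖T v‖ = ‖v‖ * (‖v‖⁻¹ * ‖T v‖) := by field_simp
        _ ≤ ‖v‖ * c := mul_le_mul_of_nonneg_left hle hvpos.le
        _ = c * ‖v‖ := mul_comm _ _
  refine ⟨c, hc0, ?_, hbound⟩
  -- strictness: suppose c = mu
  by_contra hcm
  have hceq : c = mu := le_antisymm hcmu (not_lt.mp hcm)
  -- select near-maximizing sequence
  have hsel : ∀ n : ℕ, ∃ v : EE, ‖v‖ ≤ 1 ∧ v 0 = 0 ∧ mu - 1 / (n + 1) < ‖T v‖ := by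
    intro n
    have hlt : mu - 1 / (n + 1) < sSup Q := by
      rw [← hceq] at *
      rw [hceq]
      have : (0:ℝ) < 1 / (n + 1) := by positivity
      linarith [hceq]
    obtain ⟨r, hrQ, hrlt⟩ := exists_lt_of_lt_csSup hQne hlt
    obtain ⟨v, hv1, hv0, rfl⟩ := hrQ
    exact ⟨v, hv1, hv0, hrlt⟩
  choose v hv1 hv0 hvlt using hsel
  -- compactness: subsequence with T v (φ n) convergent
  obtain ⟨K, hK, hKsub⟩ :=
    IsCompactOperator.image_closedBall_subset_compact (𝕜₁ := ℝ)
      (f := (T : EE →ₗ[ℝ] EE)) hTcomp 1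
  have hmemK : ∀ n, T (v n) ∈ K := fun n =>
    hKsub ⟨v n, mem_closedBall_zero_iff.mpr (hv1 n), rfl⟩
  obtain ⟨y, hyK, φ, hφ, hconv⟩ := hK.tendsto_subseq hmemK
  have hconv' : Filter.Tendsto (fun n => T (v (φ n))) Filter.atTop (nhds y) := hconv
  -- norms tend to mu
  have hlow : Filter.Tendsto (fun n : ℕ => mu - 1 / (n + 1)) Filter.atTop (nhds mu) := by
    have h0 : Filter.Tendsto (fun n : ℕ => 1 / ((n:ℝ) + 1)) Filter.atTop (nhds 0) :=
      tendsto_one_div_add_atTop_nhds_zero_nat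
    simpa using tendsto_const_nhds.sub h0
  have hTv_lim : Filter.Tendsto (fun n => ‖T (v (φ n))‖) Filter.atTop (nhds mu) := by
    apply tendsto_of_tendsto_of_tendsto_of_le_of_le hlow tendsto_const_nhds
    · intro n
      have h1 : mu - 1 / ((φ n : ℝ) + 1) < ‖T (v (φ n))‖ := hvlt (φ n)
      have h2 : 1 / ((φ n : ℝ) + 1) ≤ 1 / ((n : ℝ) + 1) := by
        apply one_div_le_one_div_of_le (by positivity)
        have h3 : n ≤ φ n := hφ.le_apply
        have h4 : (n : ℝ) ≤ (φ n : ℝ) := Nat.cast_le.mpr h3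
        linarith
      linarith
    · intro n
      calc ‖T (v (φ n))‖ ≤ ‖T‖ * ‖v (φ n)‖ := T.le_opNorm _
        _ ≤ mu * 1 := by rw [hmu]; exact mul_le_mul_of_nonneg_left (hv1 _) hmupos.le
        _ = mu := mul_one mu
  have hynorm : ‖y‖ = mu := tendsto_nhds_unique hconv'.norm hTv_lim
  -- the vanishing of T² v - mu² v
  have hTnorm : ∀ u : EE, ‖T u‖ ≤ mu * ‖u‖ := by
    intro u; rw [← hmu]; exact T.le_opNorm u
  have hsq_bound : ∀ n, ‖T (T (v (φ n))) - (mu ^ 2) • v (φ n)‖ ^ 2 ≤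
      2 * mu ^ 4 - 2 * mu ^ 2 * ‖T (v (φ n))‖ ^ 2 := by
    intro n
    set w := v (φ n) with hwdef
    have hw1 : ‖w‖ ≤ 1 := hv1 _
    have hip : ⟪T (T w), (mu ^ 2) • w⟫ = mu ^ 2 * ‖T w‖ ^ 2 := by
      rw [real_inner_smul_right, hTsym, real_inner_self_eq_norm_sq]
    have hexp : ‖T (T w) - (mu ^ 2) • w‖ ^ 2 =
        ‖T (T w)‖ ^ 2 - 2 * (mu ^ 2 * ‖T w‖ ^ 2) + mu ^ 4 * ‖w‖ ^ 2 := by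
      rw [norm_sub_sq_real, hip, norm_smul]
      simp only [Real.norm_eq_abs, mul_pow, sq_abs]
      ring
    have h1 : ‖T (T w)‖ ≤ mu * ‖T w‖ := hTnorm _
    have h2 : ‖T w‖ ≤ mu * ‖w‖ := hTnorm _
    have h3 : ‖T w‖ ≤ mu := by
      calc ‖T w‖ ≤ mu * ‖w‖ := h2
        _ ≤ mu * 1 := mul_le_mul_of_nonneg_left hw1 hmupos.le
        _ = mu := mul_one mu
    rw [hexp]
    have hTTw : ‖T (T w)‖ ^ 2 ≤ mu ^ 2 * ‖T w‖ ^ 2 := by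
      have := mul_self_le_mul_self (norm_nonneg (T (T w))) h1
      nlinarith [norm_nonneg (T w)]
    have hw2 : mu ^ 4 * ‖w‖ ^ 2 ≤ mu ^ 4 := by
      have h5 : ‖w‖ ^ 2 ≤ 1 := by nlinarith [norm_nonneg w, hw1]
      calc mu ^ 4 * ‖w‖ ^ 2 ≤ mu ^ 4 * 1 := by
            apply mul_le_mul_of_nonneg_left h5 (by positivity)
        _ = mu ^ 4 := mul_one _
    nlinarith [hTTw, hw2, h3, norm_nonneg (T w), sq_nonneg mu,
      mul_le_mul h3 h3 (norm_nonneg _) hmupos.le, sq_nonneg (‖T w‖ - mu)]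
  have hbnd_lim : Filter.Tendsto (fun n => 2 * mu ^ 4 - 2 * mu ^ 2 * ‖T (v (φ n))‖ ^ 2)
      Filter.atTop (nhds 0) := by
    have h1 : Filter.Tendsto (fun n => ‖T (v (φ n))‖ ^ 2) Filter.atTop (nhds (mu ^ 2)) :=
      hTv_lim.pow 2
    have h2 := (tendsto_const_nhds (x := 2 * mu ^ 4)).sub (h1.const_mul (2 * mu ^ 2))
    have h3 : 2 * mu ^ 4 - 2 * mu ^ 2 * mu ^ 2 = 0 := by ring
    rw [h3] at h2
    exact h2
  have hgsq : Filter.Tendsto (fun n => ‖T (T (v (φ n))) - (mu ^ 2) • v (φ n)‖ ^ 2)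
      Filter.atTop (nhds 0) := by
    apply tendsto_of_tendsto_of_tendsto_of_le_of_le tendsto_const_nhds hbnd_lim
    · intro n; positivity
    · exact hsq_bound
  have hgnorm : Filter.Tendsto (fun n => ‖T (T (v (φ n))) - (mu ^ 2) • v (φ n)‖)
      Filter.atTop (nhds 0) := by
    have hcont := (Real.continuous_sqrt.tendsto 0).comp hgsq
    simp only [Real.sqrt_zero] at hcont
    convert hcont using 2 with n
    simp only [Function.comp_apply]
    rw [Real.sqrt_sq (norm_nonneg _)]
  have hg0 : Filter.Tendsto (fun n => T (T (v (φ n))) - (mu ^ 2) • v (φ n))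
      Filter.atTop (nhds 0) := tendsto_zero_iff_norm_tendsto_zero.mpr hgnorm
  have hT2y : Filter.Tendsto (fun n => T (T (v (φ n)))) Filter.atTop (nhds (T y)) :=
    (T.continuous.tendsto y).comp hconv'
  have hmu2v : Filter.Tendsto (fun n => (mu ^ 2) • v (φ n)) Filter.atTop (nhds (T y)) := by
    have := hT2y.sub hg0
    simpa using this
  set w : EE := (mu ^ 2)⁻¹ • T y with hwdef
  have hmu2ne : (mu ^ 2 : ℝ) ≠ 0 := by positivity
  have hvw : Filter.Tendsto (fun n => v (φ n)) Filter.atTop (nhds w) := by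
    have := hmu2v.const_smul ((mu ^ 2)⁻¹)
    simp only [smul_smul, inv_mul_cancel₀ hmu2ne, one_smul] at this
    exact this
  -- properties of w
  have hw0 : w 0 = 0 := by
    have hnormdiff : Filter.Tendsto (fun n => ‖v (φ n) - w‖) Filter.atTop (nhds 0) :=
      tendsto_iff_norm_sub_tendsto_zero.mp hvw
    have hcoord : Filter.Tendsto (fun n => |v (φ n) 0 - w 0|) Filter.atTop (nhds 0) := by
      apply tendsto_of_tendsto_of_tendsto_of_le_of_le tendsto_const_nhds hnormdiff
      · intro n; positivity
      · intro n
        have h := lp.norm_apply_le_norm (p := 2) (by norm_num) (v (φ n) - w) 0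
        simpa [lp.coeFn_sub, Real.norm_eq_abs] using h
    simp only [hv0] at hcoord
    have h2 : Filter.Tendsto (fun _ : ℕ => |0 - w 0|) Filter.atTop (nhds 0) := hcoord
    have := tendsto_nhds_unique h2 tendsto_const_nhds
    rw [zero_sub, abs_neg] at this
    exact abs_eq_zero.mp this.symm
  have hwnorm : ‖w‖ = 1 := by
    have hn : Filter.Tendsto (fun n => ‖v (φ n)‖) Filter.atTop (nhds ‖w‖) := hvw.norm
    have hle1 : ‖w‖ ≤ 1 := le_of_tendsto hn (Filter.Eventually.of_forall fun n => hv1 _)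
    have hge : mu ≤ mu * ‖w‖ := by
      have hmn : Filter.Tendsto (fun n => mu * ‖v (φ n)‖) Filter.atTop (nhds (mu * ‖w‖)) :=
        hn.const_mul mu
      exact le_of_tendsto_of_tendsto' hTv_lim hmn fun n => hTnorm _
    have : 1 ≤ ‖w‖ := by
      by_contra h
      push_neg at h
      nlinarith
    linarith
  have hT2w : T (T w) = (mu ^ 2) • w := by
    have h1 : Filter.Tendsto (fun n => T (T (v (φ n)))) Filter.atTop (nhds (T (T w))) :=
      ((T.continuous.comp T.continuous).tendsto w).comp hvw
    have h2 : T (T w) = T y := tendsto_nhds_unique h1 hT2y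
    rw [h2, hwdef, smul_smul, mul_inv_cancel₀ hmu2ne, one_smul]
  -- Perron step
  set b : EE := mu • w - T w with hbdef
  have hTb : T b = -(mu • b) := by
    have h1 : T b = mu • T w - (mu ^ 2) • w := by
      rw [hbdef, map_sub, map_smul, hT2w]
    rw [h1, hbdef]
    module
  have hb0 : b = 0 := perron T hTsym ht mu hmu hmupos b hTb
  have hTww : T w = mu • w := (sub_eq_zero.mp hb0).symm
  obtain ⟨c', hc'⟩ := hsimple w hTww
  have : w 0 = c' * ν₀ 0 := by
    rw [hc']
    simp only [lp.coeFn_smul, Pi.smul_apply, smul_eq_mul]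
  rw [hw0] at this
  have hc'0 : c' = 0 := by
    rcases mul_eq_zero.mp this.symm with h | h
    · exact h
    · exact absurd h (ne_of_gt hν00)
  have : w = 0 := by rw [hc', hc'0, zero_smul]
  rw [this, norm_zero] at hwnorm
  norm_num at hwnorm

/-- If `T` is a compact symmetric operator on `ℓ²(ℕ)` with strictly positive matrix
entries and simple top eigenvalue `μ = ‖T‖` whose eigenvector `ν₀` has `ν₀(0) > 0`,
and `S` is the shifted operator `(Su)(0) = 0`, `(Su)(i+1) = (Tu)(i)` (corresponding
to `Ã(i,j) = A(i−1,j)` for `i ≥ 1`, `Ã(0,·) = 0`), then the spectral radius of `S`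
is strictly smaller than the spectral radius of `T`, which equals `‖T‖`. -/
theorem stmt8 (T S : lp (fun _ : ℕ => ℝ) 2 →L[ℝ] lp (fun _ : ℕ => ℝ) 2)
    (hTsym : ∀ u v, ⟪T u, v⟫ = ⟪u, T v⟫)
    (hTcomp : IsCompactOperator T)
    (hpos : ∀ i j : ℕ, 0 < ⟪T (lp.single 2 j (1 : ℝ)), lp.single 2 i (1 : ℝ)⟫)
    (mu : ℝ) (ν₀ : lp (fun _ : ℕ => ℝ) 2)
    (hmu : ‖T‖ = mu) (heig : T ν₀ = mu • ν₀) (hν₀ne : ν₀ ≠ 0)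
    (hsimple : ∀ v, T v = mu • v → ∃ c : ℝ, v = c • ν₀)
    (hν00 : 0 < ν₀ 0)
    (hS0 : ∀ u, S u 0 = 0)
    (hSshift : ∀ u, ∀ i : ℕ, S u (i + 1) = T u i) :
    spectralRadius ℝ S < spectralRadius ℝ T ∧
      spectralRadius ℝ T = (‖T‖₊ : ENNReal) := by
  -- entries positivity in coordinate form
  have ht : ∀ i j : ℕ, 0 < (T (lp.single 2 i (1:ℝ))) j := by
    intro i j
    have h := hpos j i
    rw [lp.inner_single_right] at h
    simpa [RCLike.inner_apply] using h
  -- positivity of mu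
  have hmunn : 0 ≤ mu := hmu ▸ norm_nonneg T
  have hmupos : 0 < mu := by
    rcases hmunn.lt_or_eq with h | h
    · exact h
    · exfalso
      have hT0 : T = 0 := by
        rw [← norm_eq_zero, hmu, ← h]
      have := ht 0 0
      rw [hT0] at this
      simp at this
  -- nontrivial instance
  haveI : Nontrivial (lp (fun _ : ℕ => ℝ) 2) := by
    refine nontrivial_of_ne (lp.single 2 0 (1:ℝ)) 0 ?_
    intro h
    have h1 := congrArg (fun f : lp (fun _ : ℕ => ℝ) 2 => f 0) h
    simp only [lp.single_apply_self] at h1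
    simpa using h1
  -- mu in the spectrum of T
  have hmem : mu ∈ spectrum ℝ T := by
    rw [spectrum.mem_iff]
    intro hunit
    obtain ⟨u, hu⟩ := hunit
    have h0 : (algebraMap ℝ (lp (fun _ : ℕ => ℝ) 2 →L[ℝ] lp (fun _ : ℕ => ℝ) 2) mu - T) ν₀
        = 0 := by
      rw [ContinuousLinearMap.sub_apply, Algebra.algebraMap_eq_smul_one]
      rw [ContinuousLinearMap.smul_apply, ContinuousLinearMap.one_apply, heig, sub_self]
    have hν : ν₀ = 0 := by
      calc ν₀ = (↑u⁻¹ * ↑u : lp (fun _ : ℕ => ℝ) 2 →L[ℝ] lp (fun _ : ℕ => ℝ) 2) ν₀ := by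
            rw [Units.inv_mul]
            rfl
        _ = (↑u⁻¹ : lp (fun _ : ℕ => ℝ) 2 →L[ℝ] lp (fun _ : ℕ => ℝ) 2)
              ((↑u : lp (fun _ : ℕ => ℝ) 2 →L[ℝ] lp (fun _ : ℕ => ℝ) 2) ν₀) := rfl
        _ = 0 := by rw [hu, h0, map_zero]
    exact hν₀ne hν
  -- spectral radius of T equals its norm
  have hradT : spectralRadius ℝ T = (‖T‖₊ : ENNReal) := by
    refine le_antisymm (spectrum.spectralRadius_le_nnnorm T) ?_
    have h1 : (‖mu‖₊ : ENNReal) ≤ spectralRadius ℝ T := by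
      rw [spectralRadius]
      exact le_iSup₂ (f := fun k (_ : k ∈ spectrum ℝ T) => (‖k‖₊ : ENNReal)) mu hmem
    have h2 : ‖mu‖₊ = ‖T‖₊ := by
      rw [← hmu]
      simp [nnnorm_norm]
    rwa [h2] at h1
  refine ⟨?_, hradT⟩
  -- norms under the shift
  have hsq : ∀ f : lp (fun _ : ℕ => ℝ) 2, ‖f‖ ^ 2 = ∑' i, ‖f i‖ ^ 2 := by
    intro f
    have := lp.norm_rpow_eq_tsum (p := 2) (by norm_num) f
    simpa [Real.rpow_natCast] using this
  have hsummable : ∀ f : lp (fun _ : ℕ => ℝ) 2, Summable fun i => ‖f i‖ ^ 2 := by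
    intro f
    have := (lp.memℓp f)
    rw [memℓp_gen_iff (p := 2) (by norm_num)] at this
    simpa [Real.rpow_natCast] using this
  have hSnorm : ∀ u, ‖S u‖ = ‖T u‖ := by
    intro u
    have h1 : ‖S u‖ ^ 2 = ‖T u‖ ^ 2 := by
      rw [hsq (S u), hsq (T u)]
      rw [Summable.tsum_eq_zero_add (hsummable (S u))]
      simp only [hS0 u, hSshift u, norm_zero]
      norm_num
    rw [← Real.sqrt_sq (norm_nonneg (S u)), ← Real.sqrt_sq (norm_nonneg (T u)), h1]
  -- spectral gap
  obtain ⟨c, hc0, hcmu, hcbound⟩ := gap T hTsym hTcomp ht mu hmu hmupos ν₀ hsimple hν00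
  -- bound on ‖S * S‖
  have hS2 : ‖S * S‖ ≤ c * mu := by
    apply ContinuousLinearMap.opNorm_le_bound _ (by positivity)
    intro u
    have h1 : ‖(S * S) u‖ = ‖T (S u)‖ := by
      rw [ContinuousLinearMap.mul_apply, hSnorm (S u)]
    have h2 : ‖T (S u)‖ ≤ c * ‖S u‖ := hcbound (S u) (hS0 u)
    have h3 : ‖S u‖ = ‖T u‖ := hSnorm u
    have h4 : ‖T u‖ ≤ mu * ‖u‖ := by rw [← hmu]; exact T.le_opNorm u
    calc ‖(S * S) u‖ = ‖T (S u)‖ := h1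
      _ ≤ c * ‖S u‖ := h2
      _ = c * ‖T u‖ := by rw [h3]
      _ ≤ c * (mu * ‖u‖) := mul_le_mul_of_nonneg_left h4 hc0
      _ = c * mu * ‖u‖ := by ring
  -- spectral radius bound for S
  have hpow := spectrum.spectralRadius_le_pow_nnnorm_pow_one_div ℝ S 1
  have hone : ‖(1 : lp (fun _ : ℕ => ℝ) 2 →L[ℝ] lp (fun _ : ℕ => ℝ) 2)‖₊ = 1 := by
    simp
  rw [hone] at hpow
  simp only [ENNReal.coe_one, ENNReal.one_rpow, mul_one] at hpow
  have hS2' : (‖S ^ (1 + 1)‖₊ : ENNReal) ≤ ((c * mu).toNNReal : ENNReal) := by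
    rw [ENNReal.coe_le_coe]
    rw [← norm_toNNReal]
    apply Real.toNNReal_le_toNNReal
    rw [pow_two]
    exact hS2
  have hlt : ((c * mu).toNNReal : ENNReal) ^ ((1 : ℝ) / (1 + 1)) < (‖T‖₊ : ENNReal) := by
    have hTnn : ‖T‖₊ = mu.toNNReal := by
      rw [← norm_toNNReal, hmu]
    rw [hTnn]
    have hcm : c * mu < mu ^ 2 := by nlinarith
    have h1 : ((c * mu).toNNReal : ENNReal) < ((mu ^ 2).toNNReal : ENNReal) := by
      rw [ENNReal.coe_lt_coe]
      exact (Real.toNNReal_lt_toNNReal_iff (by positivity)).mpr hcm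
    have h2 : (((mu ^ 2).toNNReal : ENNReal)) ^ ((1 : ℝ) / (1 + 1)) = (mu.toNNReal : ENNReal) := by
      have h3 : (mu ^ 2).toNNReal = mu.toNNReal ^ 2 := by
        rw [Real.toNNReal_pow hmunn]
      rw [h3, ENNReal.coe_pow, ← ENNReal.rpow_natCast ((mu.toNNReal : ENNReal)) 2,
        ← ENNReal.rpow_mul]
      norm_num
    calc ((c * mu).toNNReal : ENNReal) ^ ((1 : ℝ) / (1 + 1))
        < (((mu ^ 2).toNNReal : ENNReal)) ^ ((1 : ℝ) / (1 + 1)) := by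
          apply ENNReal.rpow_lt_rpow h1 (by norm_num)
      _ = (mu.toNNReal : ENNReal) := h2
  calc spectralRadius ℝ S ≤ (‖S ^ (1 + 1)‖₊ : ENNReal) ^ ((1 : ℝ) / (1 + 1)) := by
        exact_mod_cast hpow
    _ ≤ ((c * mu).toNNReal : ENNReal) ^ ((1 : ℝ) / (1 + 1)) := by
        apply ENNReal.rpow_le_rpow hS2' (by norm_num)
    _ < (‖T‖₊ : ENNReal) := hlt
    _ = spectralRadius ℝ T := hradT.symm
end

section
/- Let (A_μ)_{μ ≥ 0} be a family of symmetric operators on ℓ²(ℕ₀) with strictly positive entries A_μ(i,j) = e^{−μ(i+j+1)} K(i,j) where K has strictly positive entries and each A_μ is compact. Then the largest eigenvalue λ(μ) of A_μ satisfies: μ ↦ λ(μ) is strictly decreasing on [0,∞), log-convex, and λ(μ) ≤ e^{−μ} λ(0), so λ(μ) → 0 as μ → ∞. -/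
open Filter

private noncomputable def Fent (K : ℕ → ℕ → ℝ) (μ : ℝ) (u : ℕ → ℝ) (p : ℕ × ℕ) : ℝ :=
  Real.exp (-μ * ((p.1 : ℝ) + (p.2 : ℝ) + 1)) * K p.1 p.2 * u p.1 * u p.2

private lemma my_tsum_lt_tsum {ι : Type*} {f g : ι → ℝ} (h : ∀ i, f i ≤ g i) {i0 : ι}
    (hi : f i0 < g i0) (hf : Summable f) (hg : Summable g) : ∑' i, f i < ∑' i, g i := by
  have hfg : Summable fun i => g i - f i := hg.sub hf
  have h1 : g i0 - f i0 ≤ ∑' i, (g i - f i) :=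
    hfg.le_tsum i0 (fun j _ => sub_nonneg.2 (h j))
  have h2 : ∑' i, (g i - f i) = ∑' i, g i - ∑' i, f i := hg.tsum_sub hf
  linarith

private lemma summable_sq_of_tsum_one {u : ℕ → ℝ} (h : (∑' i, (u i) ^ 2) = 1) :
    Summable fun i => u i ^ 2 := by
  by_contra hs
  rw [tsum_eq_zero_of_not_summable hs] at h
  norm_num at h

private lemma summable_base {K : ℕ → ℕ → ℝ}
    (hHS : Summable fun p : ℕ × ℕ => (K p.1 p.2) ^ 2)
    {u : ℕ → ℝ} (hu : Summable fun i => u i ^ 2) :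
    Summable fun p : ℕ × ℕ => |K p.1 p.2| * |u p.1| * |u p.2| := by
  have h2 : Summable fun p : ℕ × ℕ => u p.1 ^ 2 * u p.2 ^ 2 :=
    hu.mul_of_nonneg hu (fun i => sq_nonneg _) (fun i => sq_nonneg _)
  refine Summable.of_nonneg_of_le (fun p => by positivity) (fun p => ?_)
    ((hHS.add h2).div_const 2)
  have h3 := two_mul_le_add_sq |K p.1 p.2| (|u p.1| * |u p.2|)
  have h4 : |K p.1 p.2| ^ 2 = K p.1 p.2 ^ 2 := sq_abs _
  have h5 : (|u p.1| * |u p.2|) ^ 2 = u p.1 ^ 2 * u p.2 ^ 2 := by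
    rw [mul_pow, sq_abs, sq_abs]
  nlinarith [abs_nonneg (K p.1 p.2), abs_nonneg (u p.1), abs_nonneg (u p.2)]

private lemma summable_fent_abs {K : ℕ → ℕ → ℝ}
    (hHS : Summable fun p : ℕ × ℕ => (K p.1 p.2) ^ 2)
    {u : ℕ → ℝ} (hu : Summable fun i => u i ^ 2) {μ : ℝ} (hμ : 0 ≤ μ) :
    Summable fun p : ℕ × ℕ => |Fent K μ u p| := by
  refine Summable.of_nonneg_of_le (fun p => abs_nonneg _) (fun p => ?_) (summable_base hHS hu)
  have hexp : |Real.exp (-μ * ((p.1 : ℝ) + (p.2 : ℝ) + 1))| ≤ 1 := by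
    rw [abs_of_pos (Real.exp_pos _)]
    apply Real.exp_le_one_iff.2
    have h0 : (0:ℝ) ≤ (p.1 : ℝ) + (p.2 : ℝ) + 1 := by positivity
    nlinarith
  calc |Fent K μ u p|
      = |Real.exp (-μ * ((p.1 : ℝ) + (p.2 : ℝ) + 1))| * (|K p.1 p.2| * |u p.1| * |u p.2|) := by
        simp [Fent, abs_mul, mul_assoc]
    _ ≤ 1 * (|K p.1 p.2| * |u p.1| * |u p.2|) := by
        apply mul_le_mul_of_nonneg_right hexp (by positivity)
    _ = |K p.1 p.2| * |u p.1| * |u p.2| := one_mul _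

private lemma summable_fent {K : ℕ → ℕ → ℝ}
    (hHS : Summable fun p : ℕ × ℕ => (K p.1 p.2) ^ 2)
    {u : ℕ → ℝ} (hu : Summable fun i => u i ^ 2) {μ : ℝ} (hμ : 0 ≤ μ) :
    Summable (Fent K μ u) :=
  (summable_fent_abs hHS hu hμ).of_abs

private lemma tsum_double_eq {K : ℕ → ℕ → ℝ}
    (hHS : Summable fun p : ℕ × ℕ => (K p.1 p.2) ^ 2)
    {u : ℕ → ℝ} (hu : Summable fun i => u i ^ 2) {μ : ℝ} (hμ : 0 ≤ μ) :
    (∑' i : ℕ, ∑' j : ℕ,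
        Real.exp (-μ * ((i : ℝ) + (j : ℝ) + 1)) * K i j * u i * u j)
      = ∑' p : ℕ × ℕ, Fent K μ u p :=
  (Summable.tsum_prod' (summable_fent hHS hu hμ)
    (fun b => (summable_fent hHS hu hμ).prod_factor b)).symm

set_option maxHeartbeats 1000000 in
/-- The key structure lemma: from the attained maximum at `μ` we extract a nonnegative
maximizing direction `v`. -/
private lemma key (K : ℕ → ℕ → ℝ) (hKpos : ∀ i j, 0 < K i j)
    (hHS : Summable fun p : ℕ × ℕ => (K p.1 p.2) ^ 2)
    (lam : ℝ → ℝ)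
    (hlam : ∀ μ : ℝ, 0 ≤ μ → IsGreatest
      {r : ℝ | ∃ u : ℕ → ℝ, (∑' i, (u i) ^ 2) = 1 ∧
        r = ∑' i : ℕ, ∑' j : ℕ,
          Real.exp (-μ * ((i : ℝ) + (j : ℝ) + 1)) * K i j * u i * u j} (lam μ))
    {μ : ℝ} (hμ : 0 ≤ μ) :
    ∃ v : ℕ → ℝ, (∀ i, 0 ≤ v i) ∧ (Summable fun i => v i ^ 2) ∧ (∃ i0, 0 < v i0) ∧
      lam μ ≤ ∑' p : ℕ × ℕ, Fent K μ v p ∧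
      ∀ μ', 0 ≤ μ' → (∑' p : ℕ × ℕ, Fent K μ' v p) ≤ lam μ' := by
  obtain ⟨u, hnorm, hval⟩ := (hlam μ hμ).1
  have hu : Summable fun i => u i ^ 2 := summable_sq_of_tsum_one hnorm
  set v : ℕ → ℝ := fun i => |u i| with hv
  have hvnn : ∀ i, 0 ≤ v i := fun i => abs_nonneg _
  have hvsq : ∀ i, v i ^ 2 = u i ^ 2 := fun i => sq_abs _
  have hvsum : Summable fun i => v i ^ 2 := by simpa only [hvsq] using hu
  have hvnorm : (∑' i, (v i) ^ 2) = 1 := by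
    rw [tsum_congr hvsq]; exact hnorm
  have habs : ∀ p : ℕ × ℕ, |Fent K μ u p| = Fent K μ v p := by
    intro p
    simp [Fent, hv, abs_mul, abs_of_pos (Real.exp_pos _), abs_of_pos (hKpos _ _)]
  refine ⟨v, hvnn, hvsum, ?_, ?_, ?_⟩
  · by_contra hc
    push_neg at hc
    have hzero : ∀ i, u i = 0 := fun i => abs_eq_zero.1 (le_antisymm (hc i) (abs_nonneg _))
    have h0 : (∑' i, (u i) ^ 2) = 0 := by
      have : (fun i => u i ^ 2) = fun _ => (0:ℝ) := funext fun i => by rw [hzero i]; ring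
      rw [this, tsum_zero]
    rw [hnorm] at h0
    norm_num at h0
  · calc lam μ = ∑' p : ℕ × ℕ, Fent K μ u p := by
          rw [hval, tsum_double_eq hHS hu hμ]
      _ ≤ ∑' p : ℕ × ℕ, |Fent K μ u p| :=
          Summable.tsum_le_tsum (fun p => le_abs_self _) (summable_fent hHS hu hμ)
            (summable_fent_abs hHS hu hμ)
      _ = ∑' p : ℕ × ℕ, Fent K μ v p := tsum_congr habs
  · intro μ' hμ'
    have hmem : (∑' i : ℕ, ∑' j : ℕ,
        Real.exp (-μ' * ((i : ℝ) + (j : ℝ) + 1)) * K i j * v i * v j) ∈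
        {r : ℝ | ∃ u : ℕ → ℝ, (∑' i, (u i) ^ 2) = 1 ∧
          r = ∑' i : ℕ, ∑' j : ℕ,
            Real.exp (-μ' * ((i : ℝ) + (j : ℝ) + 1)) * K i j * u i * u j} :=
      ⟨v, hvnorm, rfl⟩
    have h := (hlam μ' hμ').2 hmem
    rwa [tsum_double_eq hHS hvsum hμ'] at h

set_option maxHeartbeats 1000000 in
private lemma lam_pos (K : ℕ → ℕ → ℝ) (hKpos : ∀ i j, 0 < K i j)
    (lam : ℝ → ℝ)
    (hlam : ∀ μ : ℝ, 0 ≤ μ → IsGreatest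
      {r : ℝ | ∃ u : ℕ → ℝ, (∑' i, (u i) ^ 2) = 1 ∧
        r = ∑' i : ℕ, ∑' j : ℕ,
          Real.exp (-μ * ((i : ℝ) + (j : ℝ) + 1)) * K i j * u i * u j} (lam μ))
    {μ : ℝ} (hμ : 0 ≤ μ) : 0 < lam μ := by
  set u : ℕ → ℝ := fun i => if i = 0 then (1:ℝ) else 0 with hu
  have hnorm : (∑' i, (u i) ^ 2) = 1 := by
    rw [tsum_eq_single 0 (fun b hb => by simp [hu, hb])]
    simp [hu]
  have hval : (∑' i : ℕ, ∑' j : ℕ,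
      Real.exp (-μ * ((i : ℝ) + (j : ℝ) + 1)) * K i j * u i * u j)
      = Real.exp (-μ) * K 0 0 := by
    rw [tsum_eq_single 0 (fun b hb => by simp [hu, hb])]
    rw [tsum_eq_single 0 (fun b hb => by simp [hu, hb])]
    simp [hu]
  have hmem : Real.exp (-μ) * K 0 0 ∈
      {r : ℝ | ∃ w : ℕ → ℝ, (∑' i, (w i) ^ 2) = 1 ∧
        r = ∑' i : ℕ, ∑' j : ℕ,
          Real.exp (-μ * ((i : ℝ) + (j : ℝ) + 1)) * K i j * w i * w j} :=
    ⟨u, hnorm, hval.symm⟩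
  have h := (hlam μ hμ).2 hmem
  have hpos : 0 < Real.exp (-μ) * K 0 0 := mul_pos (Real.exp_pos _) (hKpos 0 0)
  linarith

set_option maxHeartbeats 1000000 in
/-- For the family `A_μ(i,j) = e^{−μ(i+j+1)} K(i,j)` with `K` symmetric with strictly
positive entries and Hilbert-Schmidt, the largest eigenvalue `λ(μ)`, characterized as
the attained supremum of the Rayleigh quotient, is strictly decreasing on `[0,∞)`,
log-convex, satisfies `λ(μ) ≤ e^{−μ} λ(0)`, and tends to `0` as `μ → ∞`. -/
theorem stmt9 (K : ℕ → ℕ → ℝ) (hKpos : ∀ i j, 0 < K i j)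
    (hKsym : ∀ i j, K i j = K j i)
    (hHS : Summable fun p : ℕ × ℕ => (K p.1 p.2) ^ 2)
    (lam : ℝ → ℝ)
    (hlam : ∀ μ : ℝ, 0 ≤ μ → IsGreatest
      {r : ℝ | ∃ u : ℕ → ℝ, (∑' i, (u i) ^ 2) = 1 ∧
        r = ∑' i : ℕ, ∑' j : ℕ,
          Real.exp (-μ * ((i : ℝ) + (j : ℝ) + 1)) * K i j * u i * u j} (lam μ)) :
    StrictAntiOn lam (Set.Ici (0 : ℝ)) ∧
    ConvexOn ℝ (Set.Ici (0 : ℝ)) (fun μ => Real.log (lam μ)) ∧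
    (∀ μ : ℝ, 0 ≤ μ → lam μ ≤ Real.exp (-μ) * lam 0) ∧
    Tendsto lam atTop (nhds 0) := by
  have hbound : ∀ μ : ℝ, 0 ≤ μ → lam μ ≤ Real.exp (-μ) * lam 0 := by
    intro μ hμ
    obtain ⟨v, hvnn, hvsum, -, hle, hub⟩ := key K hKpos hHS lam hlam hμ
    have h1 : (∑' p : ℕ × ℕ, Fent K μ v p)
        ≤ ∑' p : ℕ × ℕ, Real.exp (-μ) * Fent K 0 v p := by
      refine Summable.tsum_le_tsum (fun p => ?_) (summable_fent hHS hvsum hμ)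
        ((summable_fent hHS hvsum le_rfl).mul_left _)
      have hs : (1:ℝ) ≤ (p.1 : ℝ) + (p.2 : ℝ) + 1 := by
        have h0 : (0:ℝ) ≤ (p.1 : ℝ) + (p.2 : ℝ) := by positivity
        linarith
      have hK : 0 ≤ K p.1 p.2 * v p.1 * v p.2 := by
        have := (hKpos p.1 p.2).le
        have := hvnn p.1
        have := hvnn p.2
        positivity
      have hexp : Real.exp (-μ * ((p.1 : ℝ) + (p.2 : ℝ) + 1)) ≤ Real.exp (-μ) := by
        apply Real.exp_le_exp.2
        nlinarith
      calc Fent K μ v p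
          = Real.exp (-μ * ((p.1 : ℝ) + (p.2 : ℝ) + 1)) * (K p.1 p.2 * v p.1 * v p.2) := by
            simp [Fent, mul_assoc]
        _ ≤ Real.exp (-μ) * (K p.1 p.2 * v p.1 * v p.2) :=
            mul_le_mul_of_nonneg_right hexp hK
        _ = Real.exp (-μ) * Fent K 0 v p := by simp [Fent, mul_assoc]
    have h2 : (∑' p : ℕ × ℕ, Real.exp (-μ) * Fent K 0 v p)
        = Real.exp (-μ) * ∑' p : ℕ × ℕ, Fent K 0 v p := tsum_mul_left
    have h3 := hub 0 le_rfl
    have h4 : Real.exp (-μ) * (∑' p : ℕ × ℕ, Fent K 0 v p) ≤ Real.exp (-μ) * lam 0 :=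
      mul_le_mul_of_nonneg_left h3 (Real.exp_pos _).le
    linarith [hle, h1.trans_eq h2]
  have hlampos : ∀ μ : ℝ, 0 ≤ μ → 0 < lam μ := fun μ hμ => lam_pos K hKpos lam hlam hμ
  refine ⟨?_, ?_, hbound, ?_⟩
  · -- strict antitone
    intro μ₁ h1 μ₂ h2 hlt
    obtain ⟨v, hvnn, hvsum, ⟨i0, hi0⟩, hle, hub⟩ := key K hKpos hHS lam hlam h2
    have h1' : (0:ℝ) ≤ μ₁ := h1
    have hstrict : (∑' p : ℕ × ℕ, Fent K μ₂ v p) < ∑' p : ℕ × ℕ, Fent K μ₁ v p := by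
      refine my_tsum_lt_tsum (fun p => ?_) (i0 := (i0, i0)) ?_
        (summable_fent hHS hvsum h2) (summable_fent hHS hvsum h1')
      · have hK : 0 ≤ K p.1 p.2 * (v p.1 * v p.2) := by
          have := (hKpos p.1 p.2).le
          have := hvnn p.1
          have := hvnn p.2
          positivity
        have hs : (0:ℝ) ≤ (p.1 : ℝ) + (p.2 : ℝ) + 1 := by positivity
        have hexp : Real.exp (-μ₂ * ((p.1 : ℝ) + (p.2 : ℝ) + 1))
            ≤ Real.exp (-μ₁ * ((p.1 : ℝ) + (p.2 : ℝ) + 1)) := by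
          apply Real.exp_le_exp.2
          nlinarith [hlt.le]
        simp only [Fent, mul_assoc]
        exact mul_le_mul_of_nonneg_right hexp hK
      · have hK : 0 < K i0 i0 * (v i0 * v i0) := by
          have := hKpos i0 i0
          positivity
        have hs : (0:ℝ) < (i0 : ℝ) + (i0 : ℝ) + 1 := by positivity
        have hexp : Real.exp (-μ₂ * ((i0 : ℝ) + (i0 : ℝ) + 1))
            < Real.exp (-μ₁ * ((i0 : ℝ) + (i0 : ℝ) + 1)) := by
          apply Real.exp_lt_exp.2
          nlinarith
        simp only [Fent, mul_assoc]
        exact mul_lt_mul_of_pos_right hexp hK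
    have := hub μ₁ h1'
    linarith
  · -- log-convexity
    refine ⟨convex_Ici 0, ?_⟩
    intro x hx y hy a b ha0 hb0 hab
    simp only [smul_eq_mul]
    rcases eq_or_lt_of_le ha0 with ha0' | ha
    · simp [← ha0', show b = 1 by linarith]
    rcases eq_or_lt_of_le hb0 with hb0' | hb
    · simp [← hb0', show a = 1 by linarith]
    have hx' : (0:ℝ) ≤ x := hx
    have hy' : (0:ℝ) ≤ y := hy
    set μ : ℝ := a * x + b * y with hμdef
    have hμ : 0 ≤ μ := add_nonneg (mul_nonneg ha.le hx') (mul_nonneg hb.le hy')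
    obtain ⟨v, hvnn, hvsum, -, hle, hub⟩ := key K hKpos hHS lam hlam hμ
    have hX : ∀ p : ℕ × ℕ, 0 ≤ Fent K x v p := by
      intro p
      have hk := (hKpos p.1 p.2).le
      have hv1 := hvnn p.1
      have hv2 := hvnn p.2
      have he := (Real.exp_pos (-x * ((p.1 : ℝ) + (p.2 : ℝ) + 1))).le
      simp only [Fent]
      positivity
    have hY : ∀ p : ℕ × ℕ, 0 ≤ Fent K y v p := by
      intro p
      have hk := (hKpos p.1 p.2).le
      have hv1 := hvnn p.1
      have hv2 := hvnn p.2
      have he := (Real.exp_pos (-y * ((p.1 : ℝ) + (p.2 : ℝ) + 1))).le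
      simp only [Fent]
      positivity
    have hpq : (1/a : ℝ).HolderConjugate (1/b) := by
      refine Real.holderConjugate_iff.mpr ⟨?_, ?_⟩
      · exact one_lt_one_div ha (by linarith)
      · simp only [one_div, inv_inv]
        exact hab
    have hfa : ∀ p : ℕ × ℕ, (Fent K x v p ^ (a:ℝ)) ^ (1/a : ℝ) = Fent K x v p := by
      intro p
      rw [← Real.rpow_mul (hX p), mul_one_div_cancel ha.ne', Real.rpow_one]
    have hfb : ∀ p : ℕ × ℕ, (Fent K y v p ^ (b:ℝ)) ^ (1/b : ℝ) = Fent K y v p := by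
      intro p
      rw [← Real.rpow_mul (hY p), mul_one_div_cancel hb.ne', Real.rpow_one]
    have hfsum : Summable fun p : ℕ × ℕ => (Fent K x v p ^ (a:ℝ)) ^ (1/a : ℝ) := by
      simpa only [hfa] using summable_fent hHS hvsum hx'
    have hgsum : Summable fun p : ℕ × ℕ => (Fent K y v p ^ (b:ℝ)) ^ (1/b : ℝ) := by
      simpa only [hfb] using summable_fent hHS hvsum hy'
    obtain ⟨-, hHle⟩ := Real.summable_and_inner_le_Lp_mul_Lq_tsum_of_nonneg hpq
      (fun p => Real.rpow_nonneg (hX p) a) (fun p => Real.rpow_nonneg (hY p) b) hfsum hgsum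
    rw [one_div_one_div, one_div_one_div] at hHle
    have hpt : ∀ p : ℕ × ℕ, Fent K μ v p = Fent K x v p ^ (a:ℝ) * Fent K y v p ^ (b:ℝ) := by
      intro p
      set s : ℝ := (p.1 : ℝ) + (p.2 : ℝ) + 1 with hs
      set g : ℝ := K p.1 p.2 * (v p.1 * v p.2) with hg
      have hgnn : 0 ≤ g := by
        have := (hKpos p.1 p.2).le
        have := hvnn p.1
        have := hvnn p.2
        positivity
      have e0 : Fent K μ v p = Real.exp (-μ * s) * g := by simp [Fent, hg, hs, mul_assoc]
      have e1 : Fent K x v p = Real.exp (-x * s) * g := by simp [Fent, hg, hs, mul_assoc]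
      have e2 : Fent K y v p = Real.exp (-y * s) * g := by simp [Fent, hg, hs, mul_assoc]
      have hg1 : g = g ^ (a:ℝ) * g ^ (b:ℝ) := by
        rw [← Real.rpow_add' hgnn (by rw [hab]; exact one_ne_zero), hab, Real.rpow_one]
      calc Fent K μ v p = Real.exp (-μ * s) * g := e0
        _ = (Real.exp ((-x * s) * a) * Real.exp ((-y * s) * b)) * (g ^ (a:ℝ) * g ^ (b:ℝ)) := by
            rw [← Real.exp_add, ← hg1]
            congr 1
            rw [hμdef]; ring
        _ = (Real.exp (-x * s) ^ (a:ℝ) * g ^ (a:ℝ)) * (Real.exp (-y * s) ^ (b:ℝ) * g ^ (b:ℝ)) := by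
            rw [← Real.exp_mul, ← Real.exp_mul]; ring
        _ = Fent K x v p ^ (a:ℝ) * Fent K y v p ^ (b:ℝ) := by
            rw [e1, e2, Real.mul_rpow (Real.exp_pos _).le hgnn,
              Real.mul_rpow (Real.exp_pos _).le hgnn]
    have hTx : (∑' p : ℕ × ℕ, Fent K x v p) ≤ lam x := hub x hx'
    have hTy : (∑' p : ℕ × ℕ, Fent K y v p) ≤ lam y := hub y hy'
    have hTxnn : (0:ℝ) ≤ ∑' p : ℕ × ℕ, Fent K x v p := tsum_nonneg hX
    have hTynn : (0:ℝ) ≤ ∑' p : ℕ × ℕ, Fent K y v p := tsum_nonneg hY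
    have hfinal : lam μ ≤ lam x ^ (a:ℝ) * lam y ^ (b:ℝ) := by
      have step1 : lam μ ≤ (∑' p : ℕ × ℕ, Fent K x v p) ^ (a:ℝ)
          * (∑' p : ℕ × ℕ, Fent K y v p) ^ (b:ℝ) := by
        calc lam μ ≤ ∑' p : ℕ × ℕ, Fent K μ v p := hle
          _ = ∑' p : ℕ × ℕ, Fent K x v p ^ (a:ℝ) * Fent K y v p ^ (b:ℝ) := tsum_congr hpt
          _ ≤ (∑' p : ℕ × ℕ, (Fent K x v p ^ (a:ℝ)) ^ (1/a:ℝ)) ^ (a:ℝ)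
              * (∑' p : ℕ × ℕ, (Fent K y v p ^ (b:ℝ)) ^ (1/b:ℝ)) ^ (b:ℝ) := hHle
          _ = (∑' p : ℕ × ℕ, Fent K x v p) ^ (a:ℝ)
              * (∑' p : ℕ × ℕ, Fent K y v p) ^ (b:ℝ) := by
              rw [tsum_congr hfa, tsum_congr hfb]
      refine step1.trans (mul_le_mul ?_ ?_ (Real.rpow_nonneg hTynn b) (Real.rpow_nonneg ?_ a))
      · exact Real.rpow_le_rpow hTxnn hTx ha.le
      · exact Real.rpow_le_rpow hTynn hTy hb.le
      · exact le_trans hTxnn hTx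
    have hlx := hlampos x hx'
    have hly := hlampos y hy'
    have hlμ := hlampos μ hμ
    calc Real.log (lam (a * x + b * y)) ≤ Real.log (lam x ^ (a:ℝ) * lam y ^ (b:ℝ)) :=
        Real.log_le_log hlμ hfinal
      _ = a * Real.log (lam x) + b * Real.log (lam y) := by
          rw [Real.log_mul (Real.rpow_pos_of_pos hlx a).ne' (Real.rpow_pos_of_pos hly b).ne',
            Real.log_rpow hlx, Real.log_rpow hly]
  · -- tendsto
    have h1 : Tendsto (fun μ : ℝ => Real.exp (-μ) * lam 0) atTop (nhds 0) := by
      simpa using Real.tendsto_exp_neg_atTop_nhds_zero.mul_const (lam 0)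
    refine tendsto_of_tendsto_of_tendsto_of_le_of_le' tendsto_const_nhds h1 ?_ ?_
    · filter_upwards [eventually_ge_atTop (0:ℝ)] with μ hμ
      exact (hlampos μ hμ).le
    · filter_upwards [eventually_ge_atTop (0:ℝ)] with μ hμ
      exact hbound μ hμ
end

section
/- Let (a_n)_{n ∈ 2ℕ} be a sequence of real numbers satisfying the almost-superadditivity a_{m+n} ≥ a_m + a_n − log(min(m,n) + 1) for all even m, n, with a_n ≥ −Cn for some constant C. Then the limit lim_{n → ∞, n even} a_n / n exists in ℝ ∪ {+∞}. -/
open Filter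

noncomputable def hamg (k : ℕ) : ℝ := Real.log (2 * k + 1) / k ^ 2

lemma hamg_nonneg (k : ℕ) : 0 ≤ hamg k := by
  apply div_nonneg
  · apply Real.log_nonneg; linarith [Nat.cast_nonneg (α := ℝ) k]
  · positivity

lemma hamg_summable : Summable hamg := by
  have base : Summable (fun k : ℕ => 1 / (k : ℝ) ^ ((3 : ℝ)/2)) :=
    (Real.summable_one_div_nat_rpow).2 (by norm_num)
  have hs : Summable (fun k : ℕ => 4 * (1 / (k : ℝ) ^ ((3 : ℝ)/2))) := base.mul_left 4
  apply hs.of_nonneg_of_le hamg_nonneg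
  intro k
  rcases Nat.eq_zero_or_pos k with rfl | hk
  · simp [hamg]
  · have hk1 : (1 : ℝ) ≤ k := by exact_mod_cast hk
    have hsq : 1 ≤ Real.sqrt k := by
      rw [show (1:ℝ) = Real.sqrt 1 by simp]; exact Real.sqrt_le_sqrt hk1
    have hlog : Real.log (2 * k + 1) ≤ 4 * Real.sqrt k := by
      have h1 : Real.log (2 * k + 1) = 2 * Real.log (Real.sqrt (2 * k + 1)) := by
        rw [Real.log_sqrt (by positivity)]; ring
      have h2 : Real.log (Real.sqrt (2 * k + 1)) ≤ Real.sqrt (2 * k + 1) - 1 :=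
        Real.log_le_sub_one_of_pos (Real.sqrt_pos.2 (by positivity))
      have h3 : Real.sqrt (2 * k + 1) ≤ Real.sqrt (4 * k) :=
        Real.sqrt_le_sqrt (by linarith)
      have h4 : Real.sqrt (4 * k) = 2 * Real.sqrt k := by
        rw [show (4 : ℝ) * k = 2 ^ 2 * k by ring, Real.sqrt_mul (by positivity),
          Real.sqrt_sq (by norm_num)]
      nlinarith [Real.sqrt_nonneg (k : ℝ)]
    have hrpow : (k : ℝ) ^ ((3 : ℝ)/2) * Real.sqrt k = (k : ℝ) ^ 2 := by
      rw [Real.sqrt_eq_rpow, ← Real.rpow_add (by positivity), ← Real.rpow_natCast k 2]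
      norm_num
    have hkpos : (0:ℝ) < (k:ℝ) ^ 2 := by positivity
    have hrp : (0:ℝ) < (k : ℝ) ^ ((3 : ℝ)/2) := by positivity
    rw [hamg, div_le_iff₀ hkpos]
    calc Real.log (2 * k + 1) ≤ 4 * Real.sqrt k := hlog
      _ = 4 * (1 / (k : ℝ) ^ ((3 : ℝ)/2)) * (k:ℝ)^2 := by
          field_simp
          nlinarith [hrpow]



noncomputable def hamr (n : ℕ) : ℝ := 4 * ∑' k, hamg (k + n)

lemma hamr_summable (n : ℕ) : Summable (fun k => hamg (k + n)) :=
  (summable_nat_add_iff n).2 hamg_summable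

lemma hamr_nonneg (n : ℕ) : 0 ≤ hamr n := by
  have : 0 ≤ ∑' k, hamg (k + n) := tsum_nonneg (fun k => hamg_nonneg (k + n))
  unfold hamr; linarith

lemma hamr_anti : Antitone hamr := by
  apply antitone_nat_of_succ_le
  intro n
  unfold hamr
  have h1 : ∑' k, hamg (k + n) = hamg n + ∑' k, hamg (k + 1 + n) := by
    rw [Summable.tsum_eq_zero_add (hamr_summable n)]
    simp [add_right_comm]
  have h2 : (0:ℝ) ≤ hamg n := hamg_nonneg n
  have h3 : (fun k => hamg (k + (n+1))) = fun k => hamg (k + 1 + n) := by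
    funext k; congr 1; omega
  rw [h3, h1]; linarith

lemma hamr_sub (m : ℕ) (hm : 1 ≤ m) :
    Real.log (2 * m + 1) / m ≤ hamr m - hamr (2 * m) := by
  have key : ∑ i ∈ Finset.range m, hamg (i + m) + ∑' k, hamg (k + m + m) = ∑' k, hamg (k + m) :=
    Summable.sum_add_tsum_nat_add (f := fun k => hamg (k + m)) m (hamr_summable m)
  have h2 : (fun k => hamg (k + 2 * m)) = fun k => hamg (k + m + m) := by
    funext k; congr 1; omega
  have hterm : ∀ i ∈ Finset.range m,
      Real.log (2 * m + 1) / (2 * m) ^ 2 ≤ hamg (i + m) := by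
    intro i hi
    rw [Finset.mem_range] at hi
    unfold hamg
    have him : (m:ℝ) ≤ ((i + m : ℕ) : ℝ) := by push_cast; linarith [Nat.cast_nonneg (α := ℝ) i]
    have him2 : ((i + m : ℕ) : ℝ) ≤ 2 * m := by
      push_cast
      have : (i:ℝ) ≤ m := by exact_mod_cast hi.le
      linarith
    have hlogle : Real.log (2 * m + 1) ≤ Real.log (2 * (i + m : ℕ) + 1) := by
      apply Real.log_le_log (by positivity)
      linarith
    have hlognn : 0 ≤ Real.log (2 * m + 1) := by
      apply Real.log_nonneg; linarith [Nat.cast_nonneg (α := ℝ) m]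
    have hsq : ((i + m:ℕ):ℝ) ^ 2 ≤ (2 * m) ^ 2 := by nlinarith [Nat.cast_nonneg (α := ℝ) m]
    have hp1 : (0:ℝ) < ((i + m:ℕ):ℝ)^2 := by
      have : (1:ℝ) ≤ m := by exact_mod_cast hm
      nlinarith
    exact div_le_div₀ (hlognn.trans hlogle) hlogle hp1 hsq
  have hsum : (m:ℝ) * (Real.log (2 * m + 1) / (2 * m) ^ 2) ≤
      ∑ i ∈ Finset.range m, hamg (i + m) := by
    calc (m:ℝ) * (Real.log (2 * m + 1) / (2 * m) ^ 2)
        = ∑ _i ∈ Finset.range m, Real.log (2 * m + 1) / (2 * m) ^ 2 := by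
          rw [Finset.sum_const, Finset.card_range, nsmul_eq_mul]
      _ ≤ ∑ i ∈ Finset.range m, hamg (i + m) := Finset.sum_le_sum hterm
  have hmpos : (0:ℝ) < m := by exact_mod_cast hm
  have heq : hamr m - hamr (2 * m) = 4 * ∑ i ∈ Finset.range m, hamg (i + m) := by
    unfold hamr
    rw [h2, ← key]; ring
  rw [heq]
  have : (m:ℝ) * (Real.log (2*m+1) / (2*m)^2) = Real.log (2*m+1) / (4*m) := by
    field_simp; ring
  rw [this] at hsum
  clear this
  have h40 : (0:ℝ) < 4 * m := by linarith
  rw [div_le_iff₀ h40] at hsum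
  rw [div_le_iff₀ hmpos]
  nlinarith [hsum]




lemma hamr_tendsto : Tendsto hamr atTop (nhds 0) := by
  have h := tendsto_sum_nat_add hamg  -- Tendsto (fun i => ∑' k, hamg (k + i)) atTop (𝓝 0)
  have := h.const_mul (4:ℝ)
  rw [mul_zero] at this
  exact this

lemma ham_key {m n : ℕ} (hmn : m ≤ n) :
    Real.log (2 * m + 1) ≤ m * hamr m + n * hamr n - (m + n) * hamr (m + n) := by
  rcases Nat.eq_zero_or_pos m with rfl | hm
  · simp
  · have h1 : (m:ℝ) * hamr m - m * hamr (2 * m) ≥ Real.log (2 * m + 1) := by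
      have := hamr_sub m hm
      have hmpos : (0:ℝ) < m := by exact_mod_cast hm
      rw [div_le_iff₀ hmpos] at this
      nlinarith [this]
    have h2 : hamr (m + n) ≤ hamr (2 * m) := hamr_anti (by omega)
    have h3 : hamr (m + n) ≤ hamr n := hamr_anti (by omega)
    have hm0 : (0:ℝ) ≤ m := Nat.cast_nonneg m
    have hn0 : (0:ℝ) ≤ n := Nat.cast_nonneg n
    have e1 : (m:ℝ) * hamr (m+n) ≤ m * hamr (2*m) := by nlinarith
    have e2 : (n:ℝ) * hamr (m+n) ≤ n * hamr n := by nlinarith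
    push_cast
    nlinarith

/-- Hammersley-type almost-superadditivity: if `a_{m+n} ≥ a_m + a_n − log(min(m,n)+1)`
for all even `m, n`, and `a_n ≥ −Cn`, then `lim a_n/n` over even `n` exists in
`ℝ ∪ {+∞}`. -/



theorem stmt10 (a : ℕ → ℝ) (C : ℝ)
    (hsuper : ∀ m n : ℕ, Even m → Even n →
      a (m + n) ≥ a m + a n - Real.log ((min m n : ℝ) + 1))
    (hlb : ∀ n : ℕ, Even n → a n ≥ -C * n) :
    ∃ L : EReal, L ≠ ⊥ ∧
      Tendsto (fun n : ℕ => ((a (2 * n) / (2 * n) : ℝ) : EReal)) atTop (nhds L) := by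
  set u : ℕ → ℝ := fun n => -(a (2 * n)) + n * hamr n with hu_def
  -- subadditivity of u, first for m ≤ n
  have hu' : ∀ m n : ℕ, m ≤ n → u (m + n) ≤ u m + u n := by
    intro m n hmn
    have hs := hsuper (2 * m) (2 * n) ⟨m, by ring⟩ ⟨n, by ring⟩
    have hmin : (((2 * m : ℕ) : ℝ) ⊓ ((2 * n : ℕ) : ℝ)) = 2 * (m:ℝ) := by
      rw [min_eq_left (by exact_mod_cast (by omega : 2 * m ≤ 2 * n))]
      push_cast; ring
    rw [hmin] at hs
    have hkey := ham_key hmn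
    have h2 : a (2 * (m + n)) = a (2 * m + 2 * n) := by ring_nf
    simp only [hu_def]
    push_cast
    rw [h2]
    linarith [hs, hkey]
  have hu : Subadditive u := by
    intro m n
    rcases le_total m n with h | h
    · exact hu' m n h
    · have := hu' n m h
      rw [Nat.add_comm n m] at this
      linarith
  -- the eventual identity
  have hev : ∀ᶠ n : ℕ in atTop,
      a (2 * n) / (2 * n) = hamr n / 2 - (u n / n) / 2 := by
    filter_upwards [eventually_ge_atTop 1] with n hn
    have hn0 : ((n : ℕ) : ℝ) ≠ 0 := by
      exact_mod_cast Nat.one_le_iff_ne_zero.1 hn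
    simp only [hu_def]
    push_cast
    field_simp
    ring
  by_cases hbdd : BddBelow (Set.range fun n : ℕ => u n / n)
  · -- finite limit
    have hlim := hu.tendsto_lim hbdd
    have hR : Tendsto (fun n : ℕ => hamr n / 2 - (u n / n) / 2) atTop
        (nhds (0 / 2 - hu.lim / 2)) :=
      (hamr_tendsto.div_const 2).sub (hlim.div_const 2)
    have hR' : Tendsto (fun n : ℕ => a (2 * n) / (2 * n)) atTop
        (nhds (0 / 2 - hu.lim / 2)) := hR.congr' (hev.mono fun n h => h.symm)
    refine ⟨((0 / 2 - hu.lim / 2 : ℝ) : EReal), EReal.coe_ne_bot _, ?_⟩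
    exact EReal.tendsto_coe.2 hR'
  · -- limit +∞
    have htb : Tendsto (fun n : ℕ => u n / n) atTop atBot := by
      rw [tendsto_atBot]
      intro b
      obtain ⟨y, ⟨n, rfl⟩, hy⟩ := not_bddBelow_iff.1 hbdd (min b 0 - 1)
      have hn0 : n ≠ 0 := by
        rintro rfl
        simp at hy
        have : min b 0 ≤ 0 := min_le_right _ _
        linarith
      have := hu.eventually_div_lt_of_div_lt hn0
        (show u n / n < b by have := min_le_left b 0; linarith)
      exact this.mono fun p hp => hp.le
    have hTop : Tendsto (fun n : ℕ => hamr n / 2 - (u n / n) / 2) atTop atTop := by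
      have h1 : Tendsto (fun n : ℕ => -((u n / n) / 2)) atTop atTop := by
        apply tendsto_neg_atBot_atTop.comp
        exact htb.atBot_div_const (by norm_num : (0:ℝ) < 2)
      have h2 := (hamr_tendsto.div_const 2).add_atTop h1
      refine h2.congr fun n => ?_
      ring
    have hTop' : Tendsto (fun n : ℕ => a (2 * n) / (2 * n)) atTop atTop :=
      hTop.congr' (hev.mono fun n h => h.symm)
    refine ⟨⊤, by simp, ?_⟩
    rw [EReal.tendsto_nhds_top_iff_real]
    intro x
    filter_upwards [hTop'.eventually_gt_atTop x] with n hn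
    exact_mod_cast EReal.coe_lt_coe_iff.2 hn
end

section
/- Let (p^{(n)})_{n ≥ 1} be a sequence of nonnegative functions on ℕ₀ defined recursively by p^{(n)}(b) ≤ ν(b)² 1_{2b+1 = n} + (p^{(n-1)} Q)(b) 1_{2b+1 < n}, with p^{(0)} = 0, where Q is a stochastic matrix with invariant probability measure ν² (i.e., ν²Q = ν², ∑ ν(i)² = 1). Then ‖p^{(n)}‖₁ ≤ 1 for all n, and any pointwise limit superior p^{(∞)} satisfies p^{(∞)}(b) ≤ ν(b)² for all b. -/
open Filter

/-- If `Q` is a stochastic kernel on `ℕ` with unique invariant probability measure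
`ν²`, and `p⁽ⁿ⁾` satisfies the recursion
`p⁽ⁿ⁾(b) ≤ ν(b)² 1_{2b+1=n} + (p⁽ⁿ⁻¹⁾Q)(b) 1_{2b+1<n}` with `p⁽⁰⁾ = 0`, then
`‖p⁽ⁿ⁾‖₁ ≤ 1` for all `n` and the pointwise limit superior satisfies
`p⁽^∞⁾(b) ≤ ν(b)²`. -/
theorem stmt12 (Q : ℕ → ℕ → ℝ) (ν : ℕ → ℝ) (p : ℕ → ℕ → ℝ)
    (hQnonneg : ∀ a b, 0 ≤ Q a b)
    (hQsummable : ∀ a, Summable (Q a))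
    (hQrow : ∀ a, ∑' b, Q a b = 1)
    (hν : ∀ i, 0 < ν i)
    (hnorm : ∑' i, (ν i) ^ 2 = 1)
    (hinv : ∀ b, ∑' a, (ν a) ^ 2 * Q a b = (ν b) ^ 2)
    (huniq : ∀ m : ℕ → ℝ, (∀ b, 0 ≤ m b) → Summable m →
      (∀ b, ∑' a, m a * Q a b = m b) → ∃ c : ℝ, ∀ b, m b = c * (ν b) ^ 2)
    (hp0 : ∀ b, p 0 b = 0)
    (hpnonneg : ∀ n b, 0 ≤ p n b)
    (hpsummable : ∀ n, Summable (p n))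
    (hrec : ∀ n b, 1 ≤ n → p n b ≤ (if 2 * b + 1 = n then (ν b) ^ 2 else 0) +
      (if 2 * b + 1 < n then ∑' a, p (n - 1) a * Q a b else 0)) :
    (∀ n, ∑' b, p n b ≤ 1) ∧
    (∀ b, limsup (fun n => p n b) atTop ≤ (ν b) ^ 2) := by
  -- ν² is summable
  have hνsum : Summable (fun i => (ν i) ^ 2) := by
    by_contra h
    rw [tsum_eq_zero_of_not_summable h] at hnorm
    norm_num at hnorm
  -- each Q entry is ≤ 1
  have hQle1 : ∀ a b, Q a b ≤ 1 := by
    intro a b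
    rw [← hQrow a]
    exact Summable.le_tsum (hQsummable a) b (fun j _ => hQnonneg a j)
  -- summability of a ↦ ν a ^ 2 * Q a b
  have hS2 : ∀ b, Summable (fun a => (ν a) ^ 2 * Q a b) := by
    intro b
    refine Summable.of_nonneg_of_le
      (fun a => mul_nonneg (sq_nonneg _) (hQnonneg a b))
      (fun a => ?_) hνsum
    exact mul_le_of_le_one_right (sq_nonneg _) (hQle1 a b)
  -- key pointwise bound
  have hkey : ∀ n b, p n b ≤ (ν b) ^ 2 := by
    intro n
    induction n with
    | zero => intro b; rw [hp0 b]; exact sq_nonneg _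
    | succ n IH =>
      intro b
      have h := hrec (n + 1) b (Nat.le_add_left 1 n)
      by_cases h1 : 2 * b + 1 = n + 1
      · simpa [h1] using h
      · by_cases h2 : 2 * b + 1 < n + 1
        · simp only [h1, h2, if_true, if_false, if_neg, zero_add] at h
          have hsum1 : Summable (fun a => p n a * Q a b) :=
            Summable.of_nonneg_of_le
              (fun a => mul_nonneg (hpnonneg n a) (hQnonneg a b))
              (fun a => mul_le_mul_of_nonneg_right (IH a) (hQnonneg a b)) (hS2 b)
          calc p (n + 1) b ≤ ∑' a, p n a * Q a b := by simpa using h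
            _ ≤ ∑' a, (ν a) ^ 2 * Q a b :=
              Summable.tsum_le_tsum (fun a => mul_le_mul_of_nonneg_right (IH a) (hQnonneg a b))
                hsum1 (hS2 b)
            _ = (ν b) ^ 2 := hinv b
        · simp only [h1, h2, if_false, add_zero] at h
          exact le_trans h (sq_nonneg _)
  constructor
  · intro n
    calc ∑' b, p n b ≤ ∑' b, (ν b) ^ 2 :=
        Summable.tsum_le_tsum (hkey n) (hpsummable n) hνsum
      _ = 1 := hnorm
  · intro b
    exact limsup_le_of_le (isCoboundedUnder_le_of_le atTop (fun n => hpnonneg n b))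
      (Eventually.of_forall (fun n => hkey n b))
end

section
/- Let ω₁ have a bounded density g₁ on ℝ with ‖g₁‖_∞ < ∞, E ω₁ = 0, and all exponential moments finite; set Ω_ℓ = ω₁ + ... + ω_ℓ and G*_{δ,β}(ℓ) = log E[e^{δΩ_ℓ − βΩ_ℓ²}]. If β = C δ²/log δ with C > 1/4, then sup_{ℓ ∈ ℕ} G*_{δ,β}(ℓ) → −∞ as δ → ∞. In particular, E[e^{δΩ_ℓ(1 − (β/δ)Ω_ℓ)} 1_{Ω_ℓ ∈ (0, δ/β)}] ≤ e^{δ²/(4β)} ‖g₁‖_∞ (δ/β) and E[e^{δΩ_ℓ(1 − (β/δ)Ω_ℓ)} 1_{Ω_ℓ ∉ (0, δ/β)}] ≤ e^{−δε} + 2ε‖g₁‖_∞ for every ε > 0, uniformly in ℓ. -/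
open MeasureTheory ProbabilityTheory Filter Topology

lemma aux_map_bound {Ω : Type*} [MeasurableSpace Ω] (μ : Measure Ω) [IsProbabilityMeasure μ]
    (w : ℕ → Ω → ℝ) (hmeas : ∀ i, Measurable (w i))
    (hindep : iIndepFun w μ)
    (hident : ∀ i, IdentDistrib (w i) (w 0) μ μ)
    (g₁ : ℝ → ℝ) (M : ℝ) (hg₁bdd : ∀ x, g₁ x ≤ M)
    (hdens : Measure.map (w 0) μ =
      MeasureTheory.volume.withDensity (fun x => ENNReal.ofReal (g₁ x)))
    (ℓ : ℕ) (hℓ : 1 ≤ ℓ) {s : Set ℝ} (hs : MeasurableSet s) :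
    μ {x | (∑ i ∈ Finset.range ℓ, w i x) ∈ s} ≤ ENNReal.ofReal M * volume s := by
  obtain ⟨k, rfl⟩ : ∃ k, ℓ = k + 1 := ⟨ℓ - 1, (Nat.succ_pred_eq_of_pos hℓ).symm⟩
  set X : Ω → ℝ := fun x => ∑ i ∈ Finset.range k, w i x with hX
  have hXm : Measurable X := Finset.measurable_sum _ fun i _ => hmeas i
  have h : IndepFun X (w k) μ := by
    have h0 := hindep.indepFun_sum_range_succ hmeas k
    have : (∑ j ∈ Finset.range k, w j) = X := by
      funext x; simp [hX, Finset.sum_apply]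
    rwa [this] at h0
  have hpair := (indepFun_iff_map_prod_eq_prod_map_map hXm.aemeasurable
    (hmeas k).aemeasurable).mp h
  have hYlaw : Measure.map (w k) μ =
      MeasureTheory.volume.withDensity (fun x => ENNReal.ofReal (g₁ x)) :=
    (hident k).map_eq.trans hdens
  have hdens_le : ∀ t : Set ℝ, MeasurableSet t →
      Measure.map (w k) μ t ≤ ENNReal.ofReal M * volume t := by
    intro t ht
    rw [hYlaw, withDensity_apply _ ht]
    calc ∫⁻ y in t, ENNReal.ofReal (g₁ y) ∂volume
        ≤ ∫⁻ _ in t, ENNReal.ofReal M ∂volume :=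
          lintegral_mono fun y => ENNReal.ofReal_le_ofReal (hg₁bdd y)
      _ = ENNReal.ofReal M * volume t := by rw [setLIntegral_const]
  have hset : MeasurableSet {p : ℝ × ℝ | p.1 + p.2 ∈ s} := measurable_add hs
  have hmap : μ {x | (∑ i ∈ Finset.range (k+1), w i x) ∈ s}
      = ((μ.map X).prod (μ.map (w k))) {p : ℝ × ℝ | p.1 + p.2 ∈ s} := by
    rw [← hpair, Measure.map_apply (hXm.prodMk (hmeas k)) hset]
    congr 1
    ext x
    simp [X, Finset.sum_range_succ]
  rw [hmap, Measure.prod_apply hset]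
  have hinner : ∀ x : ℝ, (μ.map (w k)) (Prod.mk x ⁻¹' {p : ℝ × ℝ | p.1 + p.2 ∈ s})
      ≤ ENNReal.ofReal M * volume s := by
    intro x
    have hpre : (Prod.mk x ⁻¹' {p : ℝ × ℝ | p.1 + p.2 ∈ s}) = (fun y => x + y) ⁻¹' s := rfl
    rw [hpre]
    calc (μ.map (w k)) ((fun y => x + y) ⁻¹' s)
        ≤ ENNReal.ofReal M * volume ((fun y => x + y) ⁻¹' s) :=
          hdens_le _ (measurable_const_add x hs)
      _ = ENNReal.ofReal M * volume s := by rw [measure_preimage_add]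
  have : IsProbabilityMeasure (μ.map X) := Measure.isProbabilityMeasure_map hXm.aemeasurable
  calc ∫⁻ x, (μ.map (w k)) (Prod.mk x ⁻¹' {p : ℝ × ℝ | p.1 + p.2 ∈ s}) ∂(μ.map X)
      ≤ ∫⁻ _, ENNReal.ofReal M * volume s ∂(μ.map X) := lintegral_mono hinner
    _ = ENNReal.ofReal M * volume s := by simp

section AuxStmt14

variable {Ω : Type*} [MeasurableSpace Ω] (μ : Measure Ω) [IsProbabilityMeasure μ]
    (w : ℕ → Ω → ℝ)

lemma aux_part2 (hmeas : ∀ i, Measurable (w i))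
    (hindep : iIndepFun w μ)
    (hident : ∀ i, IdentDistrib (w i) (w 0) μ μ)
    (g₁ : ℝ → ℝ) (M : ℝ)
    (hg₁nonneg : ∀ x, 0 ≤ g₁ x) (hg₁bdd : ∀ x, g₁ x ≤ M)
    (hdens : Measure.map (w 0) μ =
      MeasureTheory.volume.withDensity (fun x => ENNReal.ofReal (g₁ x)))
    (ℓ : ℕ) (hℓ : 1 ≤ ℓ) (δ β : ℝ) (hδ : 0 < δ) (hβ : 0 < β) :
    (∫ x in {x | (∑ i ∈ Finset.range ℓ, w i x) ∈ Set.Ioo 0 (δ / β)},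
        Real.exp (δ * (∑ i ∈ Finset.range ℓ, w i x)
          - β * (∑ i ∈ Finset.range ℓ, w i x) ^ 2) ∂μ)
      ≤ Real.exp (δ ^ 2 / (4 * β)) * M * (δ / β) := by
  have hM0 : 0 ≤ M := le_trans (hg₁nonneg 0) (hg₁bdd 0)
  set S : Ω → ℝ := fun x => ∑ i ∈ Finset.range ℓ, w i x with hS
  have hSm : Measurable S := Finset.measurable_sum _ fun i _ => hmeas i
  have hAm : MeasurableSet {x | S x ∈ Set.Ioo 0 (δ / β)} := hSm measurableSet_Ioo
  have hbound : ∀ x ∈ {x | S x ∈ Set.Ioo 0 (δ / β)},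
      ‖Real.exp (δ * S x - β * S x ^ 2)‖ ≤ Real.exp (δ ^ 2 / (4 * β)) := by
    intro x _
    rw [Real.norm_eq_abs, Real.abs_exp]
    apply Real.exp_le_exp.mpr
    rw [le_div_iff₀ (show (0:ℝ) < 4 * β by positivity)]
    nlinarith [sq_nonneg (2 * β * S x - δ)]
  have hμA : (μ {x | S x ∈ Set.Ioo 0 (δ / β)}).toReal ≤ M * (δ / β) := by
    have h1 := aux_map_bound μ w hmeas hindep hident g₁ M hg₁bdd hdens ℓ hℓ
      (measurableSet_Ioo (a := (0:ℝ)) (b := δ / β))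
    have h2 : ENNReal.ofReal M * volume (Set.Ioo (0:ℝ) (δ / β))
        = ENNReal.ofReal (M * (δ / β)) := by
      rw [Real.volume_Ioo, sub_zero, ← ENNReal.ofReal_mul hM0]
    exact ENNReal.toReal_le_of_le_ofReal (by positivity) (h2 ▸ h1)
  calc (∫ x in {x | S x ∈ Set.Ioo 0 (δ / β)}, Real.exp (δ * S x - β * S x ^ 2) ∂μ)
      ≤ ‖∫ x in {x | S x ∈ Set.Ioo 0 (δ / β)}, Real.exp (δ * S x - β * S x ^ 2) ∂μ‖ :=
        le_abs_self _
    _ ≤ Real.exp (δ ^ 2 / (4 * β)) * (μ {x | S x ∈ Set.Ioo 0 (δ / β)}).toReal :=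
        norm_setIntegral_le_of_norm_le_const (measure_lt_top μ _) hbound
    _ ≤ Real.exp (δ ^ 2 / (4 * β)) * (M * (δ / β)) :=
        mul_le_mul_of_nonneg_left hμA (Real.exp_pos _).le
    _ = Real.exp (δ ^ 2 / (4 * β)) * M * (δ / β) := by ring

lemma aux_part3 (hmeas : ∀ i, Measurable (w i))
    (hindep : iIndepFun w μ)
    (hident : ∀ i, IdentDistrib (w i) (w 0) μ μ)
    (g₁ : ℝ → ℝ) (M : ℝ)
    (hg₁nonneg : ∀ x, 0 ≤ g₁ x) (hg₁bdd : ∀ x, g₁ x ≤ M)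
    (hdens : Measure.map (w 0) μ =
      MeasureTheory.volume.withDensity (fun x => ENNReal.ofReal (g₁ x)))
    (ℓ : ℕ) (hℓ : 1 ≤ ℓ) (δ β ε : ℝ) (hδ : 0 < δ) (hβ : 0 < β) (hε : 0 < ε) :
    (∫ x in {x | (∑ i ∈ Finset.range ℓ, w i x) ∉ Set.Ioo 0 (δ / β)},
        Real.exp (δ * (∑ i ∈ Finset.range ℓ, w i x)
          - β * (∑ i ∈ Finset.range ℓ, w i x) ^ 2) ∂μ)
      ≤ Real.exp (-δ * ε) + 2 * ε * M := by
  have hM0 : 0 ≤ M := le_trans (hg₁nonneg 0) (hg₁bdd 0)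
  set S : Ω → ℝ := fun x => ∑ i ∈ Finset.range ℓ, w i x with hS
  have hSm : Measurable S := Finset.measurable_sum _ fun i _ => hmeas i
  set A : Set Ω := {x | S x ∉ Set.Ioo 0 (δ / β)} with hA
  have hAm : MeasurableSet A := (hSm measurableSet_Ioo).compl
  set b : Set ℝ := Set.Icc (-ε) 0 ∪ Set.Icc (δ / β) (δ / β + ε) with hb
  have hbm : MeasurableSet b := measurableSet_Icc.union measurableSet_Icc
  set B : Set Ω := S ⁻¹' b with hB
  have hBm : MeasurableSet B := hSm hbm
  -- global integrability
  have hfm : Measurable fun x => Real.exp (δ * S x - β * S x ^ 2) :=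
    ((hSm.const_mul δ).sub ((hSm.pow_const 2).const_mul β)).exp
  have hint : Integrable (fun x => Real.exp (δ * S x - β * S x ^ 2)) μ := by
    refine Integrable.mono' (integrable_const (Real.exp (δ ^ 2 / (4 * β))))
      hfm.aestronglyMeasurable (ae_of_all _ fun x => ?_)
    rw [Real.norm_eq_abs, Real.abs_exp]
    apply Real.exp_le_exp.mpr
    rw [le_div_iff₀ (show (0:ℝ) < 4 * β by positivity)]
    nlinarith [sq_nonneg (2 * β * S x - δ)]
  -- exponent nonpositive on A
  have hexp0 : ∀ x ∈ A, δ * S x - β * S x ^ 2 ≤ 0 := by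
    intro x hx
    have hx' : ¬ (0 < S x ∧ S x < δ / β) := hx
    push_neg at hx'
    rcases le_or_gt (S x) 0 with h | h
    · nlinarith [sq_nonneg (S x)]
    · have h2 : δ / β ≤ S x := hx' h
      have h3 : δ ≤ β * S x := by
        rw [div_le_iff₀ hβ] at h2; linarith
      nlinarith
  -- split
  have hsplit : (∫ x in A, Real.exp (δ * S x - β * S x ^ 2) ∂μ)
      = (∫ x in A ∩ B, Real.exp (δ * S x - β * S x ^ 2) ∂μ)
        + (∫ x in A \ B, Real.exp (δ * S x - β * S x ^ 2) ∂μ) :=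
    (integral_inter_add_diff hBm hint.integrableOn).symm
  rw [hsplit]
  have hABm : MeasurableSet (A ∩ B) := hAm.inter hBm
  have hADm : MeasurableSet (A \ B) := hAm.diff hBm
  -- bound on A ∩ B
  have h1 : (∫ x in A ∩ B, Real.exp (δ * S x - β * S x ^ 2) ∂μ) ≤ 2 * ε * M := by
    have hb1 : ∀ x ∈ A ∩ B, ‖Real.exp (δ * S x - β * S x ^ 2)‖ ≤ 1 := by
      intro x hx
      rw [Real.norm_eq_abs, Real.abs_exp]
      exact Real.exp_le_one_iff.mpr (hexp0 x hx.1)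
    have hμB : (μ (A ∩ B)).toReal ≤ 2 * ε * M := by
      have hsub : μ (A ∩ B) ≤ μ {x | S x ∈ b} := measure_mono fun x hx => hx.2
      have h2 := aux_map_bound μ w hmeas hindep hident g₁ M hg₁bdd hdens ℓ hℓ hbm
      have hvol : volume b ≤ ENNReal.ofReal (2 * ε) := by
        calc volume b ≤ volume (Set.Icc (-ε) 0) + volume (Set.Icc (δ/β) (δ/β + ε)) :=
              measure_union_le _ _
          _ = ENNReal.ofReal (2 * ε) := by
              rw [Real.volume_Icc, Real.volume_Icc, ← ENNReal.ofReal_add (by linarith)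
                (by linarith [add_sub_cancel_left (δ/β) ε]) ]
              · ring_nf
          
      have : μ (A ∩ B) ≤ ENNReal.ofReal (M * (2 * ε)) := by
        calc μ (A ∩ B) ≤ μ {x | S x ∈ b} := hsub
          _ ≤ ENNReal.ofReal M * volume b := h2
          _ ≤ ENNReal.ofReal M * ENNReal.ofReal (2 * ε) :=
              mul_le_mul_right hvol _
          _ = ENNReal.ofReal (M * (2 * ε)) := (ENNReal.ofReal_mul hM0).symm
      have := ENNReal.toReal_le_of_le_ofReal (by positivity) this
      linarith
    calc (∫ x in A ∩ B, Real.exp (δ * S x - β * S x ^ 2) ∂μ)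
        ≤ ‖∫ x in A ∩ B, Real.exp (δ * S x - β * S x ^ 2) ∂μ‖ := le_abs_self _
      _ ≤ 1 * (μ (A ∩ B)).toReal :=
          norm_setIntegral_le_of_norm_le_const (measure_lt_top μ _) hb1
      _ ≤ 2 * ε * M := by rw [one_mul]; exact hμB
  -- bound on A \ B
  have h2 : (∫ x in A \ B, Real.exp (δ * S x - β * S x ^ 2) ∂μ) ≤ Real.exp (-δ * ε) := by
    have hb2 : ∀ x ∈ A \ B, ‖Real.exp (δ * S x - β * S x ^ 2)‖ ≤ Real.exp (-δ * ε) := by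
      intro x hx
      rw [Real.norm_eq_abs, Real.abs_exp]
      apply Real.exp_le_exp.mpr
      have hxA : ¬ (0 < S x ∧ S x < δ / β) := hx.1
      push_neg at hxA
      have hxB : S x ∉ b := hx.2
      rw [hb, Set.mem_union, Set.mem_Icc, Set.mem_Icc] at hxB
      push_neg at hxB
      rcases le_or_gt (S x) 0 with h | h
      · have h3 : S x < -ε := by
          by_contra h'
          push_neg at h'
          exact absurd (hxB.1 h') (not_lt.mpr h)
        nlinarith [sq_nonneg (S x)]
      · have h4 : δ / β ≤ S x := hxA h
        have h5 : δ / β + ε < S x := by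
          rcases lt_or_ge (δ / β + ε) (S x) with h' | h'
          · exact h'
          · exact absurd (hxB.2 h4) (not_lt.mpr h')
        have h6 : δ < (S x - ε) * β := (div_lt_iff₀ hβ).mp (show δ / β < S x - ε by linarith)
        nlinarith [mul_lt_mul_of_pos_right h6 (show 0 < S x + ε by linarith),
          mul_nonneg hβ.le (sq_nonneg ε)]
    have hμ1 : (μ (A \ B)).toReal ≤ 1 := by
      refine ENNReal.toReal_le_of_le_ofReal zero_le_one ?_
      rw [ENNReal.ofReal_one]
      exact prob_le_one
    calc (∫ x in A \ B, Real.exp (δ * S x - β * S x ^ 2) ∂μ)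
        ≤ ‖∫ x in A \ B, Real.exp (δ * S x - β * S x ^ 2) ∂μ‖ := le_abs_self _
      _ ≤ Real.exp (-δ * ε) * (μ (A \ B)).toReal :=
          norm_setIntegral_le_of_norm_le_const (measure_lt_top μ _) hb2
      _ ≤ Real.exp (-δ * ε) * 1 :=
          mul_le_mul_of_nonneg_left hμ1 (Real.exp_pos _).le
      _ = Real.exp (-δ * ε) := mul_one _
  linarith


lemma aux_part1 (hmeas : ∀ i, Measurable (w i))
    (hindep : iIndepFun w μ)
    (hident : ∀ i, IdentDistrib (w i) (w 0) μ μ)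
    (g₁ : ℝ → ℝ) (M : ℝ)
    (hg₁nonneg : ∀ x, 0 ≤ g₁ x) (hg₁bdd : ∀ x, g₁ x ≤ M)
    (hdens : Measure.map (w 0) μ =
      MeasureTheory.volume.withDensity (fun x => ENNReal.ofReal (g₁ x)))
    (C : ℝ) (hC : 1 / 4 < C) :
    Tendsto (fun δ : ℝ => ⨆ ℓ : ℕ,
      Real.log (∫ x, Real.exp (δ * (∑ i ∈ Finset.range (ℓ + 1), w i x)
        - (C * δ ^ 2 / Real.log δ) * (∑ i ∈ Finset.range (ℓ + 1), w i x) ^ 2) ∂μ))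
      atTop atBot := by
  have hC0 : 0 < C := lt_trans (by norm_num) hC
  have hM0 : 0 ≤ M := le_trans (hg₁nonneg 0) (hg₁bdd 0)
  set r : ℝ := 1 - 1 / (4 * C) with hrdef
  have hr0 : 0 < r := by
    have h1 : 1 / (4 * C) < 1 := by
      rw [div_lt_one (by linarith)]; linarith
    simp only [hrdef]; linarith
  set B : ℝ → ℝ := fun δ =>
    Real.exp (δ ^ 2 / (4 * (C * δ ^ 2 / Real.log δ))) * M * (δ / (C * δ ^ 2 / Real.log δ))
      + (Real.exp (-δ * (Real.sqrt δ)⁻¹) + 2 * (Real.sqrt δ)⁻¹ * M) with hBdef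
  -- eventual bound
  have hbd : ∀ᶠ δ : ℝ in atTop, (⨆ ℓ : ℕ,
      Real.log (∫ x, Real.exp (δ * (∑ i ∈ Finset.range (ℓ + 1), w i x)
        - (C * δ ^ 2 / Real.log δ) * (∑ i ∈ Finset.range (ℓ + 1), w i x) ^ 2) ∂μ))
      ≤ Real.log (B δ) := by
    filter_upwards [eventually_ge_atTop (3:ℝ)] with δ hδ3
    have hδ1 : (1:ℝ) < δ := by linarith
    have hδ0 : (0:ℝ) < δ := by linarith
    have hlog : 0 < Real.log δ := Real.log_pos hδ1
    have hβ : 0 < C * δ ^ 2 / Real.log δ := by positivity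
    have hε : 0 < (Real.sqrt δ)⁻¹ := inv_pos.mpr (Real.sqrt_pos.mpr hδ0)
    set β := C * δ ^ 2 / Real.log δ
    refine ciSup_le fun ℓ => ?_
    set S : Ω → ℝ := fun x => ∑ i ∈ Finset.range (ℓ + 1), w i x with hSdef
    have hSm : Measurable S := Finset.measurable_sum _ fun i _ => hmeas i
    have hfm : Measurable fun x => Real.exp (δ * S x - β * S x ^ 2) :=
      ((hSm.const_mul δ).sub ((hSm.pow_const 2).const_mul β)).exp
    have hint : Integrable (fun x => Real.exp (δ * S x - β * S x ^ 2)) μ := by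
      refine Integrable.mono' (integrable_const (Real.exp (δ ^ 2 / (4 * β))))
        hfm.aestronglyMeasurable (ae_of_all _ fun x => ?_)
      rw [Real.norm_eq_abs, Real.abs_exp]
      apply Real.exp_le_exp.mpr
      rw [le_div_iff₀ (show (0:ℝ) < 4 * β by positivity)]
      nlinarith [sq_nonneg (2 * β * S x - δ)]
    have hAm : MeasurableSet {x | S x ∈ Set.Ioo 0 (δ / β)} := hSm measurableSet_Ioo
    have hIeq : (∫ x, Real.exp (δ * S x - β * S x ^ 2) ∂μ)
        = (∫ x in {x | S x ∈ Set.Ioo 0 (δ / β)}, Real.exp (δ * S x - β * S x ^ 2) ∂μ)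
          + (∫ x in {x | S x ∉ Set.Ioo 0 (δ / β)}, Real.exp (δ * S x - β * S x ^ 2) ∂μ) := by
      rw [← integral_add_compl hAm hint]
      rfl
    have hle : (∫ x, Real.exp (δ * S x - β * S x ^ 2) ∂μ) ≤ B δ := by
      rw [hIeq, hBdef]
      exact add_le_add
        (aux_part2 μ w hmeas hindep hident g₁ M hg₁nonneg hg₁bdd hdens
          (ℓ + 1) (Nat.le_add_left 1 ℓ) δ β hδ0 hβ)
        (aux_part3 μ w hmeas hindep hident g₁ M hg₁nonneg hg₁bdd hdens
          (ℓ + 1) (Nat.le_add_left 1 ℓ) δ β ((Real.sqrt δ)⁻¹) hδ0 hβ hε)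
    have hpos : 0 < ∫ x, Real.exp (δ * S x - β * S x ^ 2) ∂μ := by
      rw [integral_pos_iff_support_of_nonneg (fun x => (Real.exp_pos _).le) hint]
      have hsupp : Function.support (fun x => Real.exp (δ * S x - β * S x ^ 2)) = Set.univ :=
        Set.eq_univ_iff_forall.mpr fun x => (Real.exp_pos _).ne'
      rw [hsupp, measure_univ]
      exact zero_lt_one
    exact Real.log_le_log hpos hle
  -- B tends to 0
  have hsqrt : Tendsto Real.sqrt atTop atTop :=
    (tendsto_rpow_atTop (by norm_num : (0:ℝ) < 1/2)).congr
      (fun x => (Real.sqrt_eq_rpow x).symm)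
  have term1 : Tendsto (fun δ : ℝ =>
      Real.exp (δ ^ 2 / (4 * (C * δ ^ 2 / Real.log δ))) * M * (δ / (C * δ ^ 2 / Real.log δ)))
      atTop (𝓝 0) := by
    have base : Tendsto (fun δ : ℝ => (M / C) * (Real.log δ / δ ^ r)) atTop (𝓝 0) := by
      have h := (isLittleO_log_rpow_atTop hr0).tendsto_div_nhds_zero
      simpa using h.const_mul (M / C)
    refine base.congr' ?_
    filter_upwards [eventually_ge_atTop (3:ℝ)] with δ hδ3
    have hδ0 : (0:ℝ) < δ := by linarith
    have hlog : 0 < Real.log δ := Real.log_pos (by linarith)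
    have ha : (0:ℝ) < δ ^ (1 / (4 * C) : ℝ) := Real.rpow_pos_of_pos hδ0 _
    have h1 : δ ^ 2 / (4 * (C * δ ^ 2 / Real.log δ)) = Real.log δ * (1 / (4 * C)) := by
      field_simp
    have h2 : Real.exp (Real.log δ * (1 / (4 * C))) = δ ^ (1 / (4 * C) : ℝ) :=
      (Real.rpow_def_of_pos hδ0 _).symm
    have h3 : δ ^ r = δ / δ ^ (1 / (4 * C) : ℝ) := by
      rw [hrdef, Real.rpow_sub hδ0, Real.rpow_one]
    rw [h1, h2, h3]
    field_simp
  have term2 : Tendsto (fun δ : ℝ => Real.exp (-δ * (Real.sqrt δ)⁻¹)) atTop (𝓝 0) := by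
    have base : Tendsto (fun δ : ℝ => Real.exp (-Real.sqrt δ)) atTop (𝓝 0) := by
      simp only [Real.exp_neg]
      exact (Real.tendsto_exp_atTop.comp hsqrt).inv_tendsto_atTop
    refine base.congr' ?_
    filter_upwards [eventually_ge_atTop (1:ℝ)] with δ hδ1
    have hδ0 : (0:ℝ) < δ := by linarith
    have hs0 : Real.sqrt δ ≠ 0 := (Real.sqrt_pos.mpr hδ0).ne'
    congr 1
    rw [neg_mul, neg_inj, eq_comm]
    field_simp
    exact (Real.sq_sqrt hδ0.le).symm
  have term3 : Tendsto (fun δ : ℝ => 2 * (Real.sqrt δ)⁻¹ * M) atTop (𝓝 0) := by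
    have h := (hsqrt.inv_tendsto_atTop.const_mul (2:ℝ)).mul_const M
    simpa using h
  have hB0 : Tendsto B atTop (𝓝 0) := by
    have h := term1.add (term2.add term3)
    rw [show (0:ℝ) = 0 + (0 + 0) by norm_num]
    exact h
  have hBpos : ∀ᶠ δ : ℝ in atTop, 0 < B δ := by
    filter_upwards [eventually_ge_atTop (3:ℝ)] with δ hδ3
    have hδ0 : (0:ℝ) < δ := by linarith
    have hlog : 0 < Real.log δ := Real.log_pos (by linarith)
    have hβ : 0 < C * δ ^ 2 / Real.log δ := by positivity
    have h1 : 0 ≤ Real.exp (δ ^ 2 / (4 * (C * δ ^ 2 / Real.log δ))) * M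
        * (δ / (C * δ ^ 2 / Real.log δ)) :=
      mul_nonneg (mul_nonneg (Real.exp_pos _).le hM0) (div_nonneg hδ0.le hβ.le)
    have h2 : 0 < Real.exp (-δ * (Real.sqrt δ)⁻¹) := Real.exp_pos _
    have h3 : 0 ≤ 2 * (Real.sqrt δ)⁻¹ * M := by
      have := Real.sqrt_nonneg δ
      positivity
    rw [hBdef]
    dsimp only
    linarith
  have hBlog : Tendsto (fun δ => Real.log (B δ)) atTop atBot :=
    Real.tendsto_log_nhdsGT_zero.comp
      (tendsto_nhdsWithin_iff.mpr ⟨hB0, hBpos.mono fun δ h => h⟩)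
  exact tendsto_atBot_mono' atTop hbd hBlog

end AuxStmt14

/-- Non-lattice case with bounded density: for i.i.d. centered charges whose law has
a bounded density `g₁` (with `g₁ ≤ M`) and all exponential moments finite, if
`β = C δ² / log δ` with `C > 1/4`, then `sup_{ℓ ≥ 1} G*_{δ,β}(ℓ) → −∞` as `δ → ∞`.
Moreover, uniformly in `ℓ ≥ 1`:
`E[e^{δΩ_ℓ − βΩ_ℓ²} 1_{Ω_ℓ ∈ (0,δ/β)}] ≤ e^{δ²/(4β)} M (δ/β)` and
`E[e^{δΩ_ℓ − βΩ_ℓ²} 1_{Ω_ℓ ∉ (0,δ/β)}] ≤ e^{−δε} + 2εM` for every `ε > 0`. -/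
theorem stmt14 {Ω : Type*} [MeasurableSpace Ω] (μ : Measure Ω) [IsProbabilityMeasure μ]
    (w : ℕ → Ω → ℝ) (hmeas : ∀ i, Measurable (w i))
    (hindep : iIndepFun w μ)
    (hident : ∀ i, IdentDistrib (w i) (w 0) μ μ)
    (hmean : ∫ x, w 0 x ∂μ = 0)
    (hexp : ∀ t : ℝ, Integrable (fun x => Real.exp (t * w 0 x)) μ)
    (g₁ : ℝ → ℝ) (M : ℝ) (hg₁meas : Measurable g₁)
    (hg₁nonneg : ∀ x, 0 ≤ g₁ x) (hg₁bdd : ∀ x, g₁ x ≤ M)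
    (hdens : Measure.map (w 0) μ =
      MeasureTheory.volume.withDensity (fun x => ENNReal.ofReal (g₁ x))) :
    (∀ C : ℝ, 1 / 4 < C →
      Tendsto (fun δ : ℝ => ⨆ ℓ : ℕ,
        Real.log (∫ x, Real.exp (δ * (∑ i ∈ Finset.range (ℓ + 1), w i x)
          - (C * δ ^ 2 / Real.log δ) * (∑ i ∈ Finset.range (ℓ + 1), w i x) ^ 2) ∂μ))
        atTop atBot) ∧
    (∀ ℓ : ℕ, 1 ≤ ℓ → ∀ δ β : ℝ, 0 < δ → 0 < β →
      (∫ x in {x | (∑ i ∈ Finset.range ℓ, w i x) ∈ Set.Ioo 0 (δ / β)},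
          Real.exp (δ * (∑ i ∈ Finset.range ℓ, w i x)
            - β * (∑ i ∈ Finset.range ℓ, w i x) ^ 2) ∂μ)
        ≤ Real.exp (δ ^ 2 / (4 * β)) * M * (δ / β)) ∧
    (∀ ℓ : ℕ, 1 ≤ ℓ → ∀ δ β ε : ℝ, 0 < δ → 0 < β → 0 < ε →
      (∫ x in {x | (∑ i ∈ Finset.range ℓ, w i x) ∉ Set.Ioo 0 (δ / β)},
          Real.exp (δ * (∑ i ∈ Finset.range ℓ, w i x)
            - β * (∑ i ∈ Finset.range ℓ, w i x) ^ 2) ∂μ)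
        ≤ Real.exp (-δ * ε) + 2 * ε * M) := by
  refine ⟨fun C hC => aux_part1 μ w hmeas hindep hident g₁ M hg₁nonneg hg₁bdd hdens C hC,
    fun ℓ hℓ δ β hδ hβ =>
      aux_part2 μ w hmeas hindep hident g₁ M hg₁nonneg hg₁bdd hdens ℓ hℓ δ β hδ hβ,
    fun ℓ hℓ δ β ε hδ hβ hε =>
      aux_part3 μ w hmeas hindep hident g₁ M hg₁nonneg hg₁bdd hdens ℓ hℓ δ β ε hδ hβ hε⟩
end
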